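/- arXiv:1702.07496 — 5 statements merged into one kernel-verified Lean document; each statement's English description precedes it below -/
import Mathlib

section
/- Let x = (x_k)_{k∈ℤ} be a complex sequence with S := ∑_{k∈ℤ} |x_k x_{k+1}| < ∞. Then for every m ≥ 1 the m-th inner sum in the definition of 𝔉 converges absolutely with ∑_{k∈ℤ^m, k_{j+1} ≥ k_j + 2 for all j} ∏_{j=1}^m |x_{k_j} x_{k_j+1}| ≤ S^m/m!; consequently the series defining 𝔉(x) converges absolutely and |𝔉(x)| ≤ exp(S). -/
open Filter Topology
open scoped Classical

noncomputable section

namespace Jacobi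

/-- Admissible index tuples `k : Fin (m+1) → ℤ` with gaps `≥ 2` (an `(m+1)`-tuple,
corresponding to the `m`-th summand, `m ≥ 1`, in the paper). -/
def Tup (m : ℕ) : Type :=
  {k : Fin (m + 1) → ℤ // ∀ j : Fin m, k j.castSucc + 2 ≤ k j.succ}

/-- The function `𝔉` of Stampach--Stovicek. -/
def FF (x : ℤ → ℂ) : ℂ :=
  1 + ∑' m : ℕ, (-1 : ℂ) ^ (m + 1) * ∑' k : Tup m, ∏ j, x (k.1 j) * x (k.1 j + 1)

/-- `𝔉` applied to the restriction of `x` to `s` (extension by zeros). -/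
def FFon (s : Set ℤ) (x : ℤ → ℂ) : ℂ := FF (s.indicator x)

/-- `ℂ₀^λ`. -/
def C0 (lam : ℤ → ℂ) : Set ℂ := (closure (Set.range lam))ᶜ

/-- `der λ`: the set of (finite) accumulation points of the sequence `λ`. -/
def der (lam : ℤ → ℂ) : Set ℂ := {z | MapClusterPt z Filter.cofinite lam}

/-- The basic convergence condition (at one point of `ℂ₀^λ`). -/
def ConvCond (lam w : ℤ → ℂ) : Prop :=
  ∃ z₀ ∈ C0 lam, Summable fun n : ℤ => ‖w n ^ 2 / ((lam n - z₀) * (lam (n + 1) - z₀))‖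

/-- The characteristic function `F_𝒥`. -/
def charF (lam γ : ℤ → ℂ) (z : ℂ) : ℂ := FF fun n => γ n ^ 2 / (z - lam n)

/-- `r(z)`. -/
def rz (lam : ℤ → ℂ) (z : ℂ) : ℕ := Set.ncard {n : ℤ | lam n = z}

/-- `r₊(z)`. -/
def rp (lam : ℤ → ℂ) (z : ℂ) : ℕ := Set.ncard {n : ℤ | 0 < n ∧ lam n = z}

/-- `r₋(z)`. -/
def rm (lam : ℤ → ℂ) (z : ℂ) : ℕ := Set.ncard {n : ℤ | n ≤ 0 ∧ lam n = z}

/-- `𝒫_n(z)`. -/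
def Pz (lam w : ℤ → ℂ) (z : ℂ) (n : ℤ) : ℂ :=
  if 0 ≤ n then ∏ k ∈ Finset.Icc (1 : ℤ) n, w (k - 1) / (z - lam k)
  else ∏ k ∈ Finset.Icc (n + 1) (0 : ℤ), (z - lam k) / w (k - 1)

/-- `𝔉((γ_k²/(λ_k − z))_{k=n}^{∞})`. -/
def Fplus (lam γ : ℤ → ℂ) (z : ℂ) (n : ℤ) : ℂ :=
  FFon {k | n ≤ k} fun k => γ k ^ 2 / (lam k - z)

/-- `𝔉((γ_k²/(λ_k − z))_{k=−∞}^{n})`. -/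
def Fminus (lam γ : ℤ → ℂ) (z : ℂ) (n : ℤ) : ℂ :=
  FFon {k | k ≤ n} fun k => γ k ^ 2 / (lam k - z)

/-- `f_n(z)` for `z ∈ ℂ₀^λ`. -/
def fSol₀ (lam w γ : ℤ → ℂ) (z : ℂ) (n : ℤ) : ℂ :=
  Pz lam w z n * Fplus lam γ z (n + 1)

/-- `g_n(z)` for `z ∈ ℂ₀^λ`. -/
def gSol₀ (lam w γ : ℤ → ℂ) (z : ℂ) (n : ℤ) : ℂ :=
  (w (n - 1) * Pz lam w z (n - 1))⁻¹ * Fminus lam γ z (n - 1)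

/-- `f_n(z)` extended to `ℂ ∖ der λ` by the limit formula. -/
def fSol (lam w γ : ℤ → ℂ) (z : ℂ) (n : ℤ) : ℂ :=
  if z ∈ C0 lam then fSol₀ lam w γ z n
  else limUnder (𝓝[C0 lam] z) fun u => (u - z) ^ rp lam z * fSol₀ lam w γ u n

/-- `g_n(z)` extended to `ℂ ∖ der λ` by the limit formula. -/
def gSol (lam w γ : ℤ → ℂ) (z : ℂ) (n : ℤ) : ℂ :=
  if z ∈ C0 lam then gSol₀ lam w γ z n
  else limUnder (𝓝[C0 lam] z) fun u => (u - z) ^ rm lam z * gSol₀ lam w γ u n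

/-- The extended zero set `𝔷(𝒥)` of the characteristic function. -/
def Zset (lam w γ : ℤ → ℂ) : Set ℂ :=
  {z | z ∉ der lam ∧
    Tendsto (fun u => (u - z) ^ rz lam z * charF lam γ u) (𝓝[C0 lam] z) (𝓝 0)}

/-- The Hilbert space `ℓ²(ℤ)`. -/
abbrev ℓ2 : Type := lp (fun _ : ℤ => ℂ) 2

/-- The formal Jacobi matrix acting on sequences. -/
def Jop (lam w : ℤ → ℂ) (u : ℤ → ℂ) : ℤ → ℂ := fun n =>
  w (n - 1) * u (n - 1) + lam n * u n + w n * u (n + 1)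

lemma Jop_add (lam w : ℤ → ℂ) (u v : ℤ → ℂ) :
    Jop lam w (u + v) = Jop lam w u + Jop lam w v := by
  funext n; simp [Jop]; ring

lemma Jop_smul (lam w : ℤ → ℂ) (c : ℂ) (u : ℤ → ℂ) :
    Jop lam w (c • u) = c • Jop lam w u := by
  funext n; simp [Jop]; ring

/-- The domain of the maximal operator. -/
def JmaxDom (lam w : ℤ → ℂ) : Submodule ℂ ℓ2 where
  carrier := {x | Memℓp (Jop lam w ⇑x) 2}
  add_mem' := by
    intro x y hx hy
    show Memℓp (Jop lam w ⇑(x + y)) 2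
    rw [lp.coeFn_add, Jop_add]
    exact hx.add hy
  zero_mem' := by
    show Memℓp (Jop lam w ⇑(0 : ℓ2)) 2
    have h0 : Jop lam w ⇑(0 : ℓ2) = 0 := by
      funext n; simp [Jop, lp.coeFn_zero]
    rw [h0]
    exact zero_memℓp
  smul_mem' := by
    intro c x hx
    show Memℓp (Jop lam w ⇑(c • x)) 2
    rw [lp.coeFn_smul, Jop_smul]
    exact hx.const_smul c

/-- The maximal operator `J_max` as a partially defined linear operator on `ℓ²(ℤ)`. -/
def Jmax (lam w : ℤ → ℂ) : ℓ2 →ₗ.[ℂ] ℓ2 where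
  domain := JmaxDom lam w
  toFun :=
    { toFun := fun x => (⟨Jop lam w ⇑(x : ℓ2), x.2⟩ : ℓ2)
      map_add' := by
        intro x y
        apply lp.ext
        rw [lp.coeFn_add]
        show Jop lam w ⇑((x : ℓ2) + (y : ℓ2)) = Jop lam w ⇑(x : ℓ2) + Jop lam w ⇑(y : ℓ2)
        rw [lp.coeFn_add, Jop_add]
      map_smul' := by
        intro c x
        apply lp.ext
        rw [lp.coeFn_smul]
        show Jop lam w ⇑(c • (x : ℓ2)) = c • Jop lam w ⇑(x : ℓ2)
        rw [lp.coeFn_smul, Jop_smul] }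

/-- The standard basis vector `e n` in `ℓ²(ℤ)`. -/
def eVec (n : ℤ) : ℓ2 := lp.single 2 n (1 : ℂ)

/-- The span of the standard basis vectors. -/
def stdSpan : Submodule ℂ ℓ2 := Submodule.span ℂ (Set.range eVec)

/-- The minimal operator `J_min`: the closure of the restriction of `𝒥` to the span of the
standard basis. -/
def Jmin (lam w : ℤ → ℂ) : ℓ2 →ₗ.[ℂ] ℓ2 :=
  ((Jmax lam w).domRestrict stdSpan).closure

/-- `z` is an eigenvalue of the partially defined operator `T`. -/
def IsEV (T : ℓ2 →ₗ.[ℂ] ℓ2) (z : ℂ) : Prop :=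
  ∃ x : T.domain, (x : ℓ2) ≠ 0 ∧ T x = z • (x : ℓ2)

/-- `z` belongs to the resolvent set of `T`: `T - z` is a bijection of `Dom T` onto `ℓ²(ℤ)`
with bounded (continuous linear) inverse. -/
def InRes (T : ℓ2 →ₗ.[ℂ] ℓ2) (z : ℂ) : Prop :=
  ∃ R : ℓ2 →L[ℂ] ℓ2,
    (∀ x : T.domain, R (T x - z • (x : ℓ2)) = x) ∧
    ∀ y : ℓ2, ∃ hy : R y ∈ T.domain, T ⟨R y, hy⟩ - z • (R y) = y

/-- The spectrum of a partially defined operator. -/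
def Spec (T : ℓ2 →ₗ.[ℂ] ℓ2) : Set ℂ := {z | ¬ InRes T z}

/-- `Ker (T - z)^n`. -/
def iterKer (T : ℓ2 →ₗ.[ℂ] ℓ2) (z : ℂ) : ℕ → Set ℓ2
  | 0 => {0}
  | n + 1 => {x | ∃ hx : x ∈ T.domain, ((T ⟨x, hx⟩ : ℓ2) - z • x) ∈ iterKer T z n}

/-- The set of generalized eigenvectors of `T` at `z`. -/
def genEig (T : ℓ2 →ₗ.[ℂ] ℓ2) (z : ℂ) : Set ℓ2 :=
  {x | ∃ n : ℕ, x ∈ iterKer T z n}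

/-- `Φ_p^+`. -/
def PhiP (lam : ℤ → ℂ) (p : ℕ) (z : ℂ) : ℂ :=
  ∏' n : ℕ, ((1 - lam ((n : ℤ) + 1) / z) *
    Complex.exp (∑ j ∈ Finset.Icc 1 (p - 1), (lam ((n : ℤ) + 1) / z) ^ j / (j : ℂ)))

/-- `Φ_p^-`. -/
def PhiM (lam : ℤ → ℂ) (p : ℕ) (z : ℂ) : ℂ :=
  ∏' n : ℕ, ((1 - lam (-(n : ℤ)) / z) *
    Complex.exp (∑ j ∈ Finset.Icc 1 (p - 1), (lam (-(n : ℤ)) / z) ^ j / (j : ℂ)))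

/-- `Ψ_p^+`. -/
def PsiP (lam : ℤ → ℂ) (p : ℕ) (z : ℂ) : ℂ :=
  ∏' n : ℕ, ((1 - z / lam ((n : ℤ) + 1)) *
    Complex.exp (∑ j ∈ Finset.Icc 1 (p - 1), (z / lam ((n : ℤ) + 1)) ^ j / (j : ℂ)))

/-- `Ψ_p^-`. -/
def PsiM (lam : ℤ → ℂ) (p : ℕ) (z : ℂ) : ℂ :=
  ∏' n : ℕ, ((1 - z / lam (-(n : ℤ))) *
    Complex.exp (∑ j ∈ Finset.Icc 1 (p - 1), (z / lam (-(n : ℤ))) ^ j / (j : ℂ)))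

end Jacobi

/- Summing `∏ j, y (k j)` over all `n`-tuples gives `S ^ n`, `S = ∑' i, y i`. A strictly increasing
tuple and its `n!` reorderings are distinct `n`-tuples, so the strictly increasing ones, among
them the admissible tuples of `Jacobi.Tup`, contribute at most `S ^ n / n!`. Summing these
bounds over `n ≥ 1` gives `exp S - 1`. -/

theorem hasSum_prod_pi_fin {ι : Type*} {y : ι → ℝ} (hy : 0 ≤ y) (hs : Summable y) (n : ℕ) :
    HasSum (fun k : Fin n → ι => ∏ j, y (k j)) ((∑' i, y i) ^ n) := by
  induction n with
  | zero => simp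
  | succ n ih =>
    set g := fun k : Fin n → ι => ∏ j, y (k j)
    have hg : 0 ≤ g := fun k => Finset.prod_nonneg fun j _ => hy (k j)
    have hmul : HasSum (fun p : ι × (Fin n → ι) => y p.1 * g p.2) ((∑' i, y i) * (∑' i, y i) ^ n) :=
      hs.hasSum.mul ih (hs.mul_of_nonneg ih.summable hy hg)
    rw [← (Fin.consEquiv fun _ => ι).hasSum_iff, pow_succ']
    convert hmul using 2 with p
    simp only [g, Function.comp_apply, Fin.consEquiv_apply, Fin.prod_univ_succ, Fin.cons_zero,
      Fin.cons_succ]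

section StrictMono

variable {ι : Type*} [LinearOrder ι] {y : ι → ℝ}

theorem summable_prod_strictMono (hy : 0 ≤ y) (hs : Summable y) (n : ℕ) :
    Summable fun k : {k : Fin n → ι // StrictMono k} => ∏ j, y (k.1 j) :=
  (hasSum_prod_pi_fin hy hs n).summable.comp_injective Subtype.val_injective

theorem injective_strictMono_comp_perm (n : ℕ) :
    Function.Injective fun p : {k : Fin n → ι // StrictMono k} × Equiv.Perm (Fin n) =>
      p.1.1 ∘ p.2 := by
  rintro ⟨k, σ⟩ ⟨k', σ'⟩ h
  have hk : k = k' := by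
    refine Subtype.ext ((k.2.range_inj k'.2).mp ?_)
    simpa only [EquivLike.range_comp] using congrArg Set.range h
  subst hk
  simpa using DFunLike.coe_injective (k.2.injective.comp_left h)

theorem tsum_prod_strictMono_le (hy : 0 ≤ y) (hs : Summable y) (n : ℕ) :
    ∑' k : {k : Fin n → ι // StrictMono k}, ∏ j, y (k.1 j) ≤ (∑' i, y i) ^ n / n.factorial := by
  set P := fun k : {k : Fin n → ι // StrictMono k} => ∏ j, y (k.1 j)
  have hall := hasSum_prod_pi_fin hy hs n
  have hinj := injective_strictMono_comp_perm (ι := ι) n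
  have hperm (p : {k : Fin n → ι // StrictMono k} × Equiv.Perm (Fin n)) :
      ∏ j, y ((p.1.1 ∘ p.2) j) = P p.1 :=
    Equiv.prod_comp p.2 fun j => y (p.1.1 j)
  have hsum : Summable fun p : {k : Fin n → ι // StrictMono k} × Equiv.Perm (Fin n) => P p.1 :=
    (hall.summable.comp_injective hinj).congr hperm
  have hcount : ∑' p : {k : Fin n → ι // StrictMono k} × Equiv.Perm (Fin n), P p.1 =
      n.factorial * ∑' k, P k := by
    rw [hsum.tsum_prod' fun _ => Summable.of_finite, ← tsum_mul_left]
    simp [Fintype.card_perm]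
  rw [le_div_iff₀ (by positivity), mul_comm, ← hcount, ← hall.tsum_eq]
  exact hsum.tsum_le_tsum_of_inj _ hinj (fun _ _ => Finset.prod_nonneg fun j _ => hy _)
    (fun p => (hperm p).ge) hall.summable

end StrictMono

theorem Real.hasSum_pow_succ_div_factorial (r : ℝ) :
    HasSum (fun m : ℕ => r ^ (m + 1) / (m + 1).factorial) (Real.exp r - 1) := by
  have h := NormedSpace.expSeries_div_hasSum_exp r
  rw [← Real.exp_eq_exp_ℝ, ← hasSum_nat_add_iff' 1] at h
  simpa using h

namespace Jacobi

theorem Tup.strictMono {m : ℕ} (k : Tup m) : StrictMono k.1 :=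
  Fin.strictMono_iff_lt_succ.mpr fun j => by have := k.2 j; omega

def Tup.toStrictMono (m : ℕ) (k : Tup m) : {k : Fin (m + 1) → ℤ // StrictMono k} :=
  ⟨k.1, k.strictMono⟩

theorem Tup.toStrictMono_injective (m : ℕ) : Function.Injective (Tup.toStrictMono m) :=
  fun _ _ h => Subtype.ext (congrArg Subtype.val h :)

variable {y : ℤ → ℝ}

theorem Tup.summable_prod (hy : 0 ≤ y) (hs : Summable y) (m : ℕ) :
    Summable fun k : Tup m => ∏ j, y (k.1 j) :=
  ((summable_prod_strictMono hy hs (m + 1)).comp_injective (Tup.toStrictMono_injective m)).congr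
    fun _ => rfl

theorem Tup.tsum_prod_le (hy : 0 ≤ y) (hs : Summable y) (m : ℕ) :
    ∑' k : Tup m, ∏ j, y (k.1 j) ≤ (∑' i, y i) ^ (m + 1) / (m + 1).factorial := by
  calc ∑' k : Tup m, ∏ j, y (k.1 j)
      ≤ ∑' k : {k : Fin (m + 1) → ℤ // StrictMono k}, ∏ j, y (k.1 j) :=
        (Tup.summable_prod hy hs m).tsum_le_tsum_of_inj _ (Tup.toStrictMono_injective m)
          (fun _ _ => Finset.prod_nonneg fun _ _ => hy _) (fun _ => le_rfl)
          (summable_prod_strictMono hy hs _)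
    _ ≤ (∑' i, y i) ^ (m + 1) / (m + 1).factorial := tsum_prod_strictMono_le hy hs _

end Jacobi

/-- absolute convergence of the series defining `𝔉` and the bound `|𝔉(x)| ≤ e^S`. -/
theorem statement0 (x : ℤ → ℂ) (hx : Summable fun k : ℤ => ‖x k * x (k + 1)‖) :
    (∀ m : ℕ,
      Summable (fun k : Jacobi.Tup m => ‖∏ j, x (k.1 j) * x (k.1 j + 1)‖) ∧
      ∑' k : Jacobi.Tup m, ‖∏ j, x (k.1 j) * x (k.1 j + 1)‖ ≤
        (∑' k : ℤ, ‖x k * x (k + 1)‖) ^ (m + 1) / (Nat.factorial (m + 1) : ℝ)) ∧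
    Summable (fun m : ℕ =>
      ‖(-1 : ℂ) ^ (m + 1) * ∑' k : Jacobi.Tup m, ∏ j, x (k.1 j) * x (k.1 j + 1)‖) ∧
    ‖Jacobi.FF x‖ ≤ Real.exp (∑' k : ℤ, ‖x k * x (k + 1)‖) := by
  set S := ∑' k : ℤ, ‖x k * x (k + 1)‖
  have hy : 0 ≤ fun k : ℤ => ‖x k * x (k + 1)‖ := fun _ => norm_nonneg _
  have hterms (m : ℕ) :
      Summable (fun k : Jacobi.Tup m => ‖∏ j, x (k.1 j) * x (k.1 j + 1)‖) ∧
      ∑' k : Jacobi.Tup m, ‖∏ j, x (k.1 j) * x (k.1 j + 1)‖ ≤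
        S ^ (m + 1) / (Nat.factorial (m + 1) : ℝ) := by
    simp only [norm_prod]
    exact ⟨Jacobi.Tup.summable_prod hy hx m, Jacobi.Tup.tsum_prod_le hy hx m⟩
  have hbound (m : ℕ) :
      ‖(-1 : ℂ) ^ (m + 1) * ∑' k : Jacobi.Tup m, ∏ j, x (k.1 j) * x (k.1 j + 1)‖ ≤
        S ^ (m + 1) / (Nat.factorial (m + 1) : ℝ) := by
    rw [norm_mul, norm_pow, norm_neg, norm_one, one_pow, one_mul]
    exact (norm_tsum_le_tsum_norm (hterms m).1).trans (hterms m).2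
  have hexp := Real.hasSum_pow_succ_div_factorial S
  have hsum := hexp.summable.of_nonneg_of_le (fun _ => norm_nonneg _) hbound
  refine ⟨hterms, hsum, ?_⟩
  calc ‖Jacobi.FF x‖
      ≤ 1 + ∑' m : ℕ,
        ‖(-1 : ℂ) ^ (m + 1) * ∑' k : Jacobi.Tup m, ∏ j, x (k.1 j) * x (k.1 j + 1)‖ := by
        refine (norm_add_le _ _).trans ?_
        rw [norm_one]
        gcongr
        exact norm_tsum_le_tsum_norm hsum
    _ ≤ 1 + (Real.exp S - 1) := by
        gcongr
        exact hexp.tsum_eq ▸ hsum.tsum_le_tsum hbound hexp.summable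
    _ = Real.exp S := by ring
end
end

section
/- Under the convergence condition, for every z ∈ ℂ∖der(λ) one has ∑_{n=1}^∞ ∏_{k=1, λ_k ≠ z}^{n} |w_{k−1}/(z − λ_k)| < ∞ and ∑_{n=−∞}^{0} (1/|w_{n−1}|) ∏_{k=n, λ_k ≠ z}^{0} |w_{k−1}/(z − λ_k)| < ∞ (the products being taken over those indices k in the stated range with λ_k ≠ z). -/
open Filter Topology
open scoped Classical

noncomputable section

/-!
Away from `der λ` only finitely many `λ_k` lie within some `ε > 0` of `z`. For the other `k`,
`‖λ_k - z₀‖ ≤ C ‖λ_k - z‖`, so the convergence condition at `z₀` gives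
`‖w_k‖² ≤ ¼ ‖λ_k - z‖ ‖λ_{k+1} - z‖` for all but finitely many `k`. On such a tail the squared
factors satisfy `‖w_{k-1} / (z - λ_k)‖² ≤ ¼ ‖λ_{k-1} - z‖ / ‖λ_k - z‖`, so the squared products
telescope to `O(4⁻ⁿ)` and the products are dominated by a geometric series of ratio `1/2`.
-/

open Finset

theorem sq_prod_Ioc_mul_le_pow_mul {a b : ℤ → ℝ} {q : ℝ} (hq : 0 ≤ q) {N : ℤ} {n : ℕ}
    (hstep : ∀ k ∈ Ioc N (N + n), b k ^ 2 * a k ≤ q * a (k - 1)) :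
    (∏ k ∈ Ioc N (N + n), b k) ^ 2 * a (N + n) ≤ q ^ n * a N := by
  induction n with
  | zero => simp
  | succ n ih =>
    have hlast : b (N + n + 1) ^ 2 * a (N + n + 1) ≤ q * a (N + n) := by
      simpa using hstep (N + n + 1) (by simp)
    have hprev := ih fun k hk => hstep k (Ioc_subset_Ioc_right (by omega) hk)
    set P := ∏ k ∈ Ioc N (N + n), b k
    push_cast
    rw [← add_assoc, ← insert_Ioc_right_eq_Ioc_add_one (by omega), prod_insert (by simp)]
    calc (b (N + n + 1) * P) ^ 2 * a (N + n + 1)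
          = b (N + n + 1) ^ 2 * a (N + n + 1) * P ^ 2 := by ring
      _ ≤ q * a (N + n) * P ^ 2 := by gcongr
      _ = q * (P ^ 2 * a (N + n)) := by ring
      _ ≤ q * (q ^ n * a N) := by gcongr
      _ = q ^ (n + 1) * a N := by ring

theorem sq_norm_div_mul_norm_le {𝕜 : Type*} [NormedDivisionRing 𝕜] {x y : 𝕜} {c : ℝ}
    (hc : 0 ≤ c) (h : ‖x‖ ^ 2 ≤ c * ‖y‖) : ‖x / y‖ ^ 2 * ‖y‖ ≤ c := by
  rcases (norm_nonneg y).eq_or_lt with hy | hy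
  · simp [← hy, hc]
  · rwa [norm_div, div_pow, sq ‖y‖, div_mul_eq_mul_div, mul_div_mul_right _ _ hy.ne',
      div_le_iff₀ hy]

theorem exists_pos_eventually_le_norm_sub {ι E : Type*} [SeminormedAddCommGroup E]
    {l : Filter ι} {u : ι → E} {x : E} (h : ¬ MapClusterPt x l u) :
    ∃ ε > 0, ∀ᶠ i in l, ε ≤ ‖u i - x‖ := by
  rw [mapClusterPt_iff_frequently] at h
  push Not at h
  obtain ⟨s, hs, hfar⟩ := h
  obtain ⟨ε, hε, hball⟩ := Metric.mem_nhds_iff.mp hs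
  exact ⟨ε, hε, hfar.mono fun i hi => not_lt.1 fun hlt =>
    hi (hball (by rwa [Metric.mem_ball, dist_eq_norm]))⟩

theorem norm_sub_le_mul_norm_sub {E : Type*} [SeminormedAddCommGroup E] {x y z : E} {ε : ℝ}
    (hε : 0 < ε) (h : ε ≤ ‖x - z‖) : ‖x - y‖ ≤ (1 + ‖z - y‖ / ε) * ‖x - z‖ := by
  calc ‖x - y‖ ≤ ‖x - z‖ + ‖z - y‖ / ε * ε := by
        rw [div_mul_cancel₀ _ hε.ne']; exact norm_sub_le_norm_sub_add_norm_sub _ _ _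
    _ ≤ ‖x - z‖ + ‖z - y‖ / ε * ‖x - z‖ := by gcongr
    _ = (1 + ‖z - y‖ / ε) * ‖x - z‖ := by ring

theorem summable_of_sq_le_geometric {f : ℕ → ℝ} {C r : ℝ} (hf : ∀ n, 0 ≤ f n) (hr₀ : 0 ≤ r)
    (hr : r < 1) (h : ∀ n, f n ^ 2 ≤ C * r ^ n) : Summable f := by
  have hC : 0 ≤ C := by simpa using (sq_nonneg (f 0)).trans (h 0)
  refine .of_nonneg_of_le hf (fun n => ?_) <| (summable_geometric_of_lt_one
    (Real.sqrt_nonneg r) ((Real.sqrt_lt' one_pos).2 (by simpa using hr))).mul_left √C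
  refine abs_le_of_sq_le_sq' ?_ (by positivity) |>.2
  rw [mul_pow, ← pow_mul, mul_comm n, pow_mul, Real.sq_sqrt hC, Real.sq_sqrt hr₀]
  exact h n

theorem Finset.prod_filter_union_of_forall {ι M : Type*} [CommMonoid M] [DecidableEq ι]
    {s t : Finset ι} {p : ι → Prop} [DecidablePred p] {f : ι → M} (hst : Disjoint s t)
    (ht : ∀ k ∈ t, p k) :
    ∏ k ∈ (s ∪ t).filter p, f k = (∏ k ∈ s.filter p, f k) * ∏ k ∈ t, f k := by
  rw [filter_union, filter_true_of_mem ht, prod_union (hst.mono_left (filter_subset _ _))]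

namespace Jacobi

variable {lam w : ℤ → ℂ} {z : ℂ} {ε : ℝ}

theorem ConvCond.eventually_sq_norm_le (hconv : ConvCond lam w) {η : ℝ} (hε : 0 < ε)
    (hη : 0 < η) (hfar : ∀ᶠ n in cofinite, ε ≤ ‖lam n - z‖) :
    ∀ᶠ n in cofinite, ‖w n‖ ^ 2 ≤ η * (‖lam n - z‖ * ‖lam (n + 1) - z‖) := by
  obtain ⟨z₀, hz₀, hsum⟩ := hconv
  have hlam : ∀ n, ‖lam n - z₀‖ ≠ 0 := fun n h =>
    hz₀ (sub_eq_zero.1 (norm_eq_zero.1 h) ▸ subset_closure (Set.mem_range_self n))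
  set C := 1 + ‖z - z₀‖ / ε
  have hC : 0 < C := by positivity
  filter_upwards [hfar, (add_left_injective 1).tendsto_cofinite.eventually hfar,
    hsum.tendsto_cofinite_zero.eventually_lt_const (div_pos hη (pow_pos hC 2))]
    with n hn hn₁ hsmall
  calc ‖w n‖ ^ 2 = ‖w n ^ 2 / ((lam n - z₀) * (lam (n + 1) - z₀))‖ *
        (‖lam n - z₀‖ * ‖lam (n + 1) - z₀‖) := by
        rw [norm_div, norm_mul, norm_pow, div_mul_cancel₀ _ (mul_ne_zero (hlam n) (hlam _))]
    _ ≤ η / C ^ 2 * ((C * ‖lam n - z‖) * (C * ‖lam (n + 1) - z‖)) := by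
        gcongr
        exacts [norm_sub_le_mul_norm_sub hε hn, norm_sub_le_mul_norm_sub hε hn₁]
    _ = η * (‖lam n - z‖ * ‖lam (n + 1) - z‖) := by
        field_simp

theorem sq_norm_weight_div_mul_le {k : ℤ}
    (h : ‖w (k - 1)‖ ^ 2 ≤ 4⁻¹ * (‖lam (k - 1) - z‖ * ‖lam (k - 1 + 1) - z‖)) :
    ‖w (k - 1) / (z - lam k)‖ ^ 2 * ‖lam k - z‖ ≤ 4⁻¹ * ‖lam (k - 1) - z‖ := by
  rw [norm_sub_rev]
  refine sq_norm_div_mul_norm_le (by positivity) ?_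
  rwa [sub_add_cancel, norm_sub_rev (lam k), ← mul_assoc] at h

theorem summable_prod_filter_Icc_pos
    (hε : 0 < ε) (hgood : ∀ᶠ k in atTop,
      ε ≤ ‖lam k - z‖ ∧ ‖w k‖ ^ 2 ≤ 4⁻¹ * (‖lam k - z‖ * ‖lam (k + 1) - z‖)) :
    Summable (fun n : ℕ =>
      ∏ k ∈ (Icc (1 : ℤ) ((n : ℤ) + 1)).filter (fun k => lam k ≠ z),
        ‖w (k - 1) / (z - lam k)‖) := by
  obtain ⟨N, hN⟩ := eventually_atTop.1 (hgood.and (eventually_ge_atTop 0))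
  lift N to ℕ using (hN N le_rfl).2
  rw [← summable_nat_add_iff N]
  set D := ∏ k ∈ (Icc (1 : ℤ) N).filter (fun k => lam k ≠ z), ‖w (k - 1) / (z - lam k)‖
  refine summable_of_sq_le_geometric (C := D ^ 2 * (‖lam N - z‖ / ε)) (r := 4⁻¹)
    (fun n => prod_nonneg fun _ _ => norm_nonneg _) (by norm_num) (by norm_num) fun n => ?_
  set m : ℤ := N + (n + 1 : ℕ)
  set P := ∏ k ∈ Ioc (N : ℤ) m, ‖w (k - 1) / (z - lam k)‖
  have htel : P ^ 2 * ‖lam m - z‖ ≤ 4⁻¹ ^ (n + 1) * ‖lam N - z‖ :=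
    sq_prod_Ioc_mul_le_pow_mul (by norm_num) fun k hk =>
      sq_norm_weight_div_mul_le (hN (k - 1) (by have := mem_Ioc.1 hk; omega)).1.2
  have hfar : ε ≤ ‖lam m - z‖ := (hN m (by omega)).1.1
  have hIcc : Icc (1 : ℤ) ((n + N : ℕ) + 1) = Icc (1 : ℤ) N ∪ Ioc (N : ℤ) m := by
    ext k; simp only [mem_union, mem_Icc, mem_Ioc, m]; omega
  rw [hIcc, prod_filter_union_of_forall, mul_pow]
  calc D ^ 2 * P ^ 2 ≤ D ^ 2 * (‖lam N - z‖ / ε * 4⁻¹ ^ (n + 1)) := by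
        gcongr
        rw [div_mul_eq_mul_div, le_div_iff₀ hε, mul_comm (‖lam N - z‖)]
        exact (mul_le_mul_of_nonneg_left hfar (sq_nonneg P)).trans htel
    _ ≤ D ^ 2 * (‖lam N - z‖ / ε * 4⁻¹ ^ n) := by
        gcongr _ * (_ * ?_)
        exact pow_le_pow_of_le_one (by norm_num) (by norm_num) n.le_succ
    _ = D ^ 2 * (‖lam N - z‖ / ε) * 4⁻¹ ^ n := by ring
  · exact disjoint_left.2 fun k h₁ h₂ => by simp only [mem_Icc, mem_Ioc] at h₁ h₂; omega
  · exact fun k hk h => hε.not_ge (by simpa [h] using (hN k (mem_Ioc.1 hk).1.le).1.1)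

theorem summable_inv_mul_prod_filter_Icc_neg (hw : ∀ n, w n ≠ 0)
    (hε : 0 < ε) (hgood : ∀ᶠ k in atBot,
      ε ≤ ‖lam k - z‖ ∧ ‖w k‖ ^ 2 ≤ 4⁻¹ * (‖lam k - z‖ * ‖lam (k + 1) - z‖)) :
    Summable (fun n : ℕ => (1 / ‖w (-(n : ℤ) - 1)‖) *
      ∏ k ∈ (Icc (-(n : ℤ)) (0 : ℤ)).filter (fun k => lam k ≠ z),
        ‖w (k - 1) / (z - lam k)‖) := by
  obtain ⟨M, hM⟩ := eventually_atBot.1 (hgood.and (eventually_le_atBot 0))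
  obtain ⟨N, rfl⟩ : ∃ N : ℕ, M = -N := ⟨(-M).toNat, by have := (hM M le_rfl).2; omega⟩
  rw [← summable_nat_add_iff N]
  set D := ∏ k ∈ (Ioc (-(N : ℤ)) 0).filter (fun k => lam k ≠ z), ‖w (k - 1) / (z - lam k)‖
  refine summable_of_sq_le_geometric (C := D ^ 2 / ε ^ 2) (r := 4⁻¹)
    (fun n => by positivity) (by norm_num) (by norm_num) fun n => ?_
  set m : ℤ := -((n + N : ℕ) : ℤ)
  set P := ∏ k ∈ Ioc m (m + n), ‖w (k - 1) / (z - lam k)‖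
  have htel : P ^ 2 * ‖lam (m + n) - z‖ ≤ 4⁻¹ ^ n * ‖lam m - z‖ :=
    sq_prod_Ioc_mul_le_pow_mul (by norm_num) fun k hk =>
      sq_norm_weight_div_mul_le (hM (k - 1) (by have := mem_Ioc.1 hk; omega)).1.2
  have hfar : ε ≤ ‖lam m - z‖ := (hM m (by omega)).1.1
  have hfar' : ε ≤ ‖lam (m + n) - z‖ := (hM _ (by omega)).1.1
  have hIcc : Icc m 0 = Ioc (-(N : ℤ)) 0 ∪ Icc m (m + n) := by
    ext k; simp only [mem_union, mem_Icc, mem_Ioc]; omega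
  rw [hIcc, prod_filter_union_of_forall, ← mul_prod_Ioc_eq_prod_Icc (by omega)]
  -- the prefactor cancels against the numerator of the factor at `k = m`
  have hw' : ‖w (m - 1)‖ ≠ 0 := norm_ne_zero_iff.2 (hw _)
  have ha : 0 < ‖lam m - z‖ := hε.trans_le hfar
  calc (1 / ‖w (m - 1)‖ * (D * (‖w (m - 1) / (z - lam m)‖ * P))) ^ 2
        = D ^ 2 * (P ^ 2 / ‖lam m - z‖ ^ 2) := by
        rw [norm_div, norm_sub_rev z]
        field_simp
    _ ≤ D ^ 2 * (4⁻¹ ^ n / ε ^ 2) := by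
        gcongr D ^ 2 * ?_
        rw [div_le_div_iff₀ (by positivity) (by positivity)]
        calc P ^ 2 * ε ^ 2 ≤ P ^ 2 * ‖lam (m + n) - z‖ * ‖lam m - z‖ := by
              rw [sq ε, ← mul_assoc]; gcongr
          _ ≤ 4⁻¹ ^ n * ‖lam m - z‖ * ‖lam m - z‖ := by gcongr
          _ = 4⁻¹ ^ n * ‖lam m - z‖ ^ 2 := by ring
    _ = D ^ 2 / ε ^ 2 * 4⁻¹ ^ n := by ring
  · exact disjoint_left.2 fun k h₁ h₂ => by simp only [mem_Icc, mem_Ioc] at h₁ h₂; omega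
  · exact fun k hk h => hε.not_ge (by simpa [h] using (hM k (by have := mem_Icc.1 hk; omega)).1.1)

end Jacobi

/-- summability of the two families of products (Lemma on summability of
`𝒫` at `±∞`). -/
theorem statement3 (lam w : ℤ → ℂ) (hw : ∀ n, w n ≠ 0) (hconv : Jacobi.ConvCond lam w)
    (z : ℂ) (hz : z ∉ Jacobi.der lam) :
    Summable (fun n : ℕ =>
      ∏ k ∈ (Finset.Icc (1 : ℤ) ((n : ℤ) + 1)).filter (fun k => lam k ≠ z),
        ‖w (k - 1) / (z - lam k)‖) ∧
    Summable (fun n : ℕ => (1 / ‖w (-(n : ℤ) - 1)‖) *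
      ∏ k ∈ (Finset.Icc (-(n : ℤ)) (0 : ℤ)).filter (fun k => lam k ≠ z),
        ‖w (k - 1) / (z - lam k)‖) := by
  obtain ⟨ε, hε, hfar⟩ := exists_pos_eventually_le_norm_sub hz
  have hgood := hfar.and (hconv.eventually_sq_norm_le hε (by norm_num : (0 : ℝ) < 4⁻¹) hfar)
  rw [Int.cofinite_eq, eventually_sup] at hgood
  exact ⟨Jacobi.summable_prod_filter_Icc_pos hε hgood.2,
    Jacobi.summable_inv_mul_prod_filter_Icc_neg hw hε hgood.1⟩
end
end

section
/- Let J_min = J_max =: J and suppose the resolvent set ρ(J) is nonempty. Then for every z ∈ ℂ and every n ∈ ℕ, the dimension of the orthogonal complement of Ker((J−z)^n) inside Ker((J−z)^{n+1}) is at most 1; in particular dim Ker((J−z)^n) ≤ n for all n ∈ ℕ. -/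
open Filter Topology
open scoped Classical

noncomputable section

/-! Both claims reduce to `dim Ker (J - z) ≤ 1`. The map `(J - z)^n` sends `Ker (J - z)^(n+1)`
into `Ker (J - z)` and is injective on the orthogonal complement of `Ker (J - z)^n`; and once
`Ker (J - z)^n` is finite-dimensional, `Ker (J - z)^(n+1)` is spanned by it and that complement.

For `dim Ker (J - z) ≤ 1`: the Jacobi matrix is symmetric, so `⟪x̄, J y⟫ = ⟪(J x)‾, y⟫` for
finitely supported `y`, and hence, by `J_min = J_max`, on the whole domain. Applied to an `ℓ²`
solution `u` and to the truncation to `n ≥ 0` of another `ℓ²` solution `v`, this forces the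
(constant) Wronskian of `u` and `v` to vanish, so `v` is a multiple of `u`. -/

namespace LinearPMap

section GenEigenspace

variable {K E : Type*} [Field K] [AddCommGroup E] [Module K E] (T : E →ₗ.[K] E) (z : K)

def subSMul : T.domain →ₗ[K] E := T.toFun - z • T.domain.subtype

lemma subSMul_apply (x : T.domain) : T.subSMul z x = T x - z • (x : E) := rfl

/-- `Ker (T - z)^n`. -/
def genEigenspace : ℕ → Submodule K E
  | 0 => ⊥
  | n + 1 => ((genEigenspace n).comap (T.subSMul z)).map T.domain.subtype

variable {T z}

lemma mem_genEigenspace_succ {n : ℕ} {x : E} :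
    x ∈ T.genEigenspace z (n + 1) ↔
      ∃ d : T.domain, T.subSMul z d ∈ T.genEigenspace z n ∧ (d : E) = x :=
  Iff.rfl

variable (T z)

lemma genEigenspace_succ_le_domain (n : ℕ) : T.genEigenspace z (n + 1) ≤ T.domain :=
  Submodule.map_subtype_le _ _

lemma genEigenspace_le_succ : ∀ n, T.genEigenspace z n ≤ T.genEigenspace z (n + 1)
  | 0 => bot_le
  | n + 1 => Submodule.map_mono (Submodule.comap_mono (genEigenspace_le_succ n))

def restrictSubSMul (n : ℕ) : T.genEigenspace z (n + 1) →ₗ[K] T.genEigenspace z n :=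
  ((T.subSMul z).comp (Submodule.inclusion (T.genEigenspace_succ_le_domain z n))).codRestrict _
    fun x => by
      obtain ⟨d, hd, hdx⟩ := mem_genEigenspace_succ.mp x.2
      rwa [LinearMap.comp_apply, show Submodule.inclusion _ x = d from Subtype.ext hdx.symm]

def iterateSubSMul : (n : ℕ) → T.genEigenspace z (n + 1) →ₗ[K] T.genEigenspace z 1
  | 0 => LinearMap.id
  | n + 1 => iterateSubSMul n ∘ₗ T.restrictSubSMul z (n + 1)

lemma mem_genEigenspace_of_iterateSubSMul_eq_zero :
    ∀ (n : ℕ) (x : T.genEigenspace z (n + 1)), T.iterateSubSMul z n x = 0 →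
      (x : E) ∈ T.genEigenspace z n
  | 0, x, hx => by rw [show x = 0 from hx]; exact zero_mem _
  | n + 1, x, hx =>
    ⟨Submodule.inclusion (T.genEigenspace_succ_le_domain z (n + 1)) x,
      mem_genEigenspace_of_iterateSubSMul_eq_zero n _ hx, rfl⟩

end GenEigenspace

section InnerProductSpace

variable {𝕜 E : Type*} [RCLike 𝕜] [NormedAddCommGroup E] [InnerProductSpace 𝕜 E]
  (T : E →ₗ.[𝕜] E) (z : 𝕜)

open Submodule in
lemma rank_orthogonal_inf_genEigenspace_le (n : ℕ) :
    Module.rank 𝕜 ↥((T.genEigenspace z n)ᗮ ⊓ T.genEigenspace z (n + 1)) ≤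
      Module.rank 𝕜 (T.genEigenspace z 1) := by
  refine LinearMap.rank_le_of_injective (T.iterateSubSMul z n ∘ₗ inclusion inf_le_right) ?_
  refine (injective_iff_map_eq_zero _).mpr fun x hx => Subtype.ext ?_
  exact disjoint_def.mp (orthogonal_disjoint _) _
    (T.mem_genEigenspace_of_iterateSubSMul_eq_zero z n _ hx) x.2.1

lemma rank_genEigenspace_le (h1 : Module.rank 𝕜 (T.genEigenspace z 1) ≤ 1) :
    ∀ n : ℕ, Module.rank 𝕜 (T.genEigenspace z n) ≤ n
  | 0 => (rank_bot 𝕜 E).le.trans_eq Nat.cast_zero.symm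
  | n + 1 => by
    have ih := rank_genEigenspace_le h1 n
    have : FiniteDimensional 𝕜 (T.genEigenspace z n) :=
      Module.rank_lt_aleph0_iff.mp (ih.trans_lt Cardinal.natCast_lt_aleph0)
    calc Module.rank 𝕜 (T.genEigenspace z (n + 1))
        = Module.rank 𝕜 ↥(T.genEigenspace z n ⊔
            (T.genEigenspace z n)ᗮ ⊓ T.genEigenspace z (n + 1)) := by
          rw [Submodule.sup_orthogonal_inf_of_hasOrthogonalProjection
            (T.genEigenspace_le_succ z n)]
      _ ≤ n + 1 := (Submodule.rank_add_le_rank_add_rank _ _).trans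
          (add_le_add ih ((T.rank_orthogonal_inf_genEigenspace_le z n).trans h1))
      _ = ↑(n + 1) := by push_cast; rfl

end InnerProductSpace

section Closure

variable {R E F : Type*} [CommRing R] [AddCommGroup E] [AddCommGroup F] [Module R E] [Module R F]
  [TopologicalSpace E] [TopologicalSpace F] [ContinuousAdd E] [ContinuousAdd F]
  [TopologicalSpace R] [ContinuousSMul R E] [ContinuousSMul R F]

lemma closure_graph_subset (f : E →ₗ.[R] F) :
    (f.closure.graph : Set (E × F)) ⊆ _root_.closure (f.graph : Set (E × F)) := by
  by_cases hf : f.IsClosable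
  · rw [← hf.graph_closure_eq_closure_graph, Submodule.topologicalClosure_coe]
  · rw [closure_def' hf]
    exact subset_closure

end Closure

end LinearPMap

namespace Jacobi

open scoped InnerProductSpace

lemma coe_genEigenspace (T : ℓ2 →ₗ.[ℂ] ℓ2) (z : ℂ) :
    ∀ n, (T.genEigenspace z n : Set ℓ2) = iterKer T z n
  | 0 => Submodule.bot_coe
  | n + 1 => by
    ext x
    simp only [SetLike.mem_coe, LinearPMap.mem_genEigenspace_succ, iterKer, Set.mem_ofPred_eq,
      ← coe_genEigenspace T z n]
    constructor
    · rintro ⟨d, hd, rfl⟩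
      exact ⟨d.2, hd⟩
    · rintro ⟨hx, hx'⟩
      exact ⟨⟨x, hx⟩, hx', rfl⟩

lemma coe_orthogonal_inf_genEigenspace (T : ℓ2 →ₗ.[ℂ] ℓ2) (z : ℂ) (n : ℕ) :
    (((T.genEigenspace z n)ᗮ ⊓ T.genEigenspace z (n + 1) : Submodule ℂ ℓ2) : Set ℓ2) =
      {x | x ∈ iterKer T z (n + 1) ∧ ∀ y ∈ iterKer T z n, ⟪y, x⟫_ℂ = 0} := by
  ext x
  simp [← coe_genEigenspace, Submodule.mem_orthogonal, and_comm]

variable {lam w : ℤ → ℂ} {z : ℂ}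

lemma Jop_apply (u : ℤ → ℂ) (n : ℤ) :
    Jop lam w u n = w (n - 1) * u (n - 1) + lam n * u n + w n * u (n + 1) := rfl

section Solutions

variable {u v : ℤ → ℂ} (hu : ∀ n, Jop lam w u n = z * u n) (hv : ∀ n, Jop lam w v n = z * v n)
include hu

lemma eq_zero_of_consecutive_eq_zero (hw : ∀ n, w n ≠ 0) {m : ℤ} (h0 : u m = 0)
    (h1 : u (m + 1) = 0) (n : ℤ) : u n = 0 := by
  suffices ∀ k, u k = 0 ∧ u (k + 1) = 0 from (this n).1
  intro k
  induction k using Int.inductionOn' (b := m) with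
  | zero => exact ⟨h0, h1⟩
  | succ k _ ih =>
    refine ⟨ih.2, ?_⟩
    have h := hu (k + 1)
    rw [Jop_apply, add_sub_cancel_right, ih.1, ih.2] at h
    exact (mul_eq_zero.mp (show w (k + 1) * u (k + 1 + 1) = 0 by linear_combination h)).resolve_left
      (hw _)
  | pred k _ ih =>
    refine ⟨?_, by rw [sub_add_cancel]; exact ih.1⟩
    have h := hu k
    rw [Jop_apply, ih.1, ih.2] at h
    exact (mul_eq_zero.mp (show w (k - 1) * u (k - 1) = 0 by linear_combination h)).resolve_left
      (hw _)

def wronskian (w u v : ℤ → ℂ) (n : ℤ) : ℂ :=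
  w n * (u n * v (n + 1) - u (n + 1) * v n)

include hv

lemma wronskian_sub_one (n : ℤ) : wronskian w u v (n - 1) = wronskian w u v n := by
  have hun := hu n
  have hvn := hv n
  rw [Jop_apply] at hun hvn
  unfold wronskian
  rw [sub_add_cancel]
  linear_combination v n * hun - u n * hvn

lemma wronskian_eq (m n : ℤ) : wronskian w u v m = wronskian w u v n := by
  induction m using Int.inductionOn' (b := n) with
  | zero => rfl
  | succ k _ ih => rw [← ih, ← wronskian_sub_one hu hv (k + 1), add_sub_cancel_right]
  | pred k _ ih => rw [wronskian_sub_one hu hv, ih]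

lemma eq_smul_of_wronskian_eq_zero (hw : ∀ n, w n ≠ 0) {m : ℤ} (hW : wronskian w u v m = 0)
    (hm : u m ≠ 0) : v = (v m / u m) • u := by
  set c := v m / u m
  have hsol : ∀ n, Jop lam w (v - c • u) n = z * (v - c • u) n := fun n => by
    have hun := hu n
    have hvn := hv n
    simp only [Jop_apply, Pi.sub_apply, Pi.smul_apply, smul_eq_mul] at hun hvn ⊢
    linear_combination hvn - c * hun
  have h0 : (v - c • u) m = 0 := by
    simp only [Pi.sub_apply, Pi.smul_apply, smul_eq_mul, c]
    field_simp
    ring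
  have h1 : (v - c • u) (m + 1) = 0 := by
    have hcross : u m * v (m + 1) - u (m + 1) * v m = 0 :=
      (mul_eq_zero.mp hW).resolve_left (hw m)
    simp only [Pi.sub_apply, Pi.smul_apply, smul_eq_mul, c]
    field_simp
    linear_combination hcross
  funext n
  exact sub_eq_zero.mp (eq_zero_of_consecutive_eq_zero hsol hw h0 h1 n)

end Solutions

section Operator

lemma Jmax_coe (x : (Jmax lam w).domain) : ⇑(Jmax lam w x) = Jop lam w ⇑(x : ℓ2) := rfl

lemma mem_domain_of_Jop_eq {x y : ℓ2} (h : Jop lam w x = y) : x ∈ (Jmax lam w).domain :=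
  show Memℓp (Jop lam w x) 2 by rw [h]; exact y.2

lemma eVec_apply (m n : ℤ) : (eVec m : ℓ2) n = if n = m then 1 else 0 := by
  rw [eVec, lp.single_apply, Pi.single_apply]

lemma inner_star_eq_tsum (a b : ℓ2) : ⟪star a, b⟫_ℂ = ∑' n, a n * b n := by
  simp [lp.inner_eq_tsum, mul_comm]

lemma inner_star_eVec (a : ℓ2) (m : ℤ) : ⟪star a, eVec m⟫_ℂ = a m := by
  simp [inner_star_eq_tsum, eVec_apply]

lemma inner_star_eVec_left (a : ℓ2) (m : ℤ) : ⟪star (eVec m), a⟫_ℂ = a m := by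
  simp [inner_star_eq_tsum, eVec_apply]

lemma Jop_eVec (m : ℤ) :
    Jop lam w ⇑(eVec m) = ⇑(w (m - 1) • eVec (m - 1) + lam m • eVec m + w m • eVec (m + 1)) := by
  funext n
  simp only [lp.coeFn_add, lp.coeFn_smul, Pi.add_apply, Pi.smul_apply, smul_eq_mul, Jop_apply,
    eVec_apply]
  split_ifs <;> subst_vars <;> first | (exfalso; omega) | simp

lemma eVec_mem_domain (m : ℤ) : eVec m ∈ (Jmax lam w).domain :=
  mem_domain_of_Jop_eq (Jop_eVec m)

lemma stdSpan_le_domain : stdSpan ≤ (Jmax lam w).domain :=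
  Submodule.span_le.mpr (Set.range_subset_iff.mpr eVec_mem_domain)

lemma inner_star_Jmax_comm_of_mem_stdSpan (v : (Jmax lam w).domain) {y : ℓ2} (hy : y ∈ stdSpan)
    (hyd : y ∈ (Jmax lam w).domain) :
    ⟪star (v : ℓ2), Jmax lam w ⟨y, hyd⟩⟫_ℂ = ⟪star (Jmax lam w v), y⟫_ℂ := by
  induction hy using Submodule.span_induction with
  | mem _ h =>
    obtain ⟨m, rfl⟩ := h
    rw [show Jmax lam w ⟨eVec m, _⟩ = _ from lp.ext (Jop_eVec m), inner_star_eVec, Jmax_coe,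
      Jop_apply]
    simp only [inner_add_right, inner_smul_right, inner_star_eVec]
  | zero =>
    rw [show (⟨0, hyd⟩ : (Jmax lam w).domain) = 0 from rfl, LinearPMap.map_zero]
    simp
  | add a b ha hb iha ihb =>
    rw [show (⟨a + b, hyd⟩ : (Jmax lam w).domain) =
        ⟨a, stdSpan_le_domain ha⟩ + ⟨b, stdSpan_le_domain hb⟩ from rfl,
      LinearPMap.map_add, inner_add_right, inner_add_right, iha, ihb]
  | smul c a ha iha =>
    rw [show (⟨c • a, hyd⟩ : (Jmax lam w).domain) = c • ⟨a, stdSpan_le_domain ha⟩ from rfl,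
      LinearPMap.map_smul, inner_smul_right, inner_smul_right, iha]

/-- The identity holds on the graph of the restriction to `stdSpan` and is closed in the graph
norm, so it passes to the graph of `J_min = J_max`. -/
lemma inner_star_Jmax_comm (hJ : Jmin lam w = Jmax lam w) (x v : (Jmax lam w).domain) :
    ⟪star (v : ℓ2), Jmax lam w x⟫_ℂ = ⟪star (Jmax lam w v), (x : ℓ2)⟫_ℂ := by
  let S : Set (ℓ2 × ℓ2) := {p | ⟪star (v : ℓ2), p.2⟫_ℂ = ⟪star (Jmax lam w v), p.1⟫_ℂ}
  have hS : IsClosed S := isClosed_eq (by fun_prop) (by fun_prop)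
  have hgraph : (((Jmax lam w).domRestrict stdSpan).graph : Set (ℓ2 × ℓ2)) ⊆ S := by
    rintro p hp
    obtain ⟨y, rfl⟩ := (LinearPMap.mem_graph_iff' _).mp hp
    change ⟪_, _⟫_ℂ = ⟪_, _⟫_ℂ
    rw [LinearPMap.domRestrict_apply (x := y) (y := ⟨y, y.2.2⟩) rfl]
    exact inner_star_Jmax_comm_of_mem_stdSpan v y.2.1 y.2.2
  have hall : ((Jmax lam w).graph : Set (ℓ2 × ℓ2)) ⊆ S := by
    rw [← hJ]
    exact (LinearPMap.closure_graph_subset _).trans (closure_minimal hgraph hS)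
  exact hall ((Jmax lam w).mem_graph x)

end Operator

section Truncation

lemma Jop_indicator_nonneg {v : ℤ → ℂ} (hv : ∀ n, Jop lam w v n = z * v n) :
    Jop lam w ({n | 0 ≤ n}.indicator v) = z • {n | 0 ≤ n}.indicator v +
      Pi.single (-1) (w (-1) * v 0) - Pi.single 0 (w (-1) * v (-1)) := by
  funext n
  have hvn := hv n
  rw [Jop_apply] at hvn
  simp only [Jop_apply, Set.indicator_apply, Set.mem_ofPred_eq, Pi.add_apply, Pi.sub_apply,
    Pi.smul_apply, smul_eq_mul, Pi.single_apply]
  rcases (show n ≤ -2 ∨ n = -1 ∨ n = 0 ∨ 1 ≤ n by omega) with h | rfl | rfl | h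
  · simp [show ¬ 1 ≤ n by omega, show ¬ 0 ≤ n by omega, show ¬ 0 ≤ n + 1 by omega,
      show n ≠ -1 by omega, show n ≠ 0 by omega]
  · norm_num
  · norm_num at hvn ⊢
    linear_combination hvn
  · simpa [h, show 0 ≤ n by omega, show 0 ≤ n + 1 by omega, show n ≠ -1 by omega,
      show n ≠ 0 by omega] using hvn

/-- Pairing `u` against the truncation of `v` to `n ≥ 0`, which lies in the domain of `J_max`,
isolates the Wronskian at `-1` as the boundary term. -/
lemma wronskian_eq_zero (hJ : Jmin lam w = Jmax lam w) {u v : ℓ2}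
    (hu : ∀ n, Jop lam w u n = z * u n) (hv : ∀ n, Jop lam w v n = z * v n) :
    wronskian w u v (-1) = 0 := by
  let t : ℓ2 := ⟨{n | 0 ≤ n}.indicator v,
    (lp.memℓp v).mono' fun n => norm_indicator_le_norm_self _ _⟩
  have hJt : Jop lam w t = ⇑(z • t + (w (-1) * v 0) • eVec (-1) - (w (-1) * v (-1)) • eVec 0) := by
    rw [Jop_indicator_nonneg hv, lp.coeFn_sub, lp.coeFn_add, lp.coeFn_smul, lp.coeFn_smul,
      lp.coeFn_smul]
    funext n
    simp [eVec_apply, Pi.single_apply, t]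
  have hJu : Jop lam w u = ⇑(z • u) := funext hu
  have key := inner_star_Jmax_comm hJ ⟨u, mem_domain_of_Jop_eq hJu⟩ ⟨t, mem_domain_of_Jop_eq hJt⟩
  rw [show Jmax lam w ⟨u, _⟩ = z • u from lp.ext hJu,
    show Jmax lam w ⟨t, _⟩ = _ from lp.ext hJt] at key
  simp only [star_add, star_sub, star_smul, inner_add_left, inner_sub_left, inner_smul_left,
    inner_smul_right, inner_star_eVec_left, starRingEnd_apply, star_star] at key
  rw [wronskian, show (-1 : ℤ) + 1 = 0 by norm_num]
  linear_combination -key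

end Truncation

lemma mem_genEigenspace_one_iff {x : ℓ2} :
    x ∈ (Jmax lam w).genEigenspace z 1 ↔ ∀ n, Jop lam w x n = z * x n := by
  constructor
  · rintro ⟨d, hd, rfl⟩ n
    have h := congrFun (congrArg (⇑) ((Submodule.mem_bot ℂ).mp hd)) n
    simp only [LinearPMap.subSMul_apply, lp.coeFn_sub, lp.coeFn_smul, Pi.sub_apply,
      Pi.smul_apply, smul_eq_mul, Jmax_coe, lp.coeFn_zero, Pi.zero_apply] at h
    exact sub_eq_zero.mp h
  · intro hx
    have hJx : Jop lam w x = ⇑(z • x) := funext hx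
    refine ⟨⟨x, mem_domain_of_Jop_eq hJx⟩, (Submodule.mem_bot ℂ).mpr ?_, rfl⟩
    rw [LinearPMap.subSMul_apply, show Jmax lam w ⟨x, _⟩ = z • x from lp.ext hJx, sub_self]

lemma rank_genEigenspace_one_le (hw : ∀ n, w n ≠ 0) (hJ : Jmin lam w = Jmax lam w) :
    Module.rank ℂ ((Jmax lam w).genEigenspace z 1) ≤ 1 := by
  rw [rank_submodule_le_one_iff']
  by_cases h : ∃ u ∈ (Jmax lam w).genEigenspace z 1, u ≠ 0
  · obtain ⟨u, hu, hu0⟩ := h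
    refine ⟨u, fun v hv => ?_⟩
    rw [mem_genEigenspace_one_iff] at hu hv
    obtain ⟨m, hm⟩ : ∃ m, u m ≠ 0 := by
      by_contra! h
      exact hu0 (lp.ext (funext h))
    have hW := wronskian_eq_zero hJ hu hv
    rw [wronskian_eq hu hv (-1) m] at hW
    exact Submodule.mem_span_singleton.mpr
      ⟨v m / u m, lp.ext (eq_smul_of_wronskian_eq_zero hu hv hw hW hm).symm⟩
  · push Not at h
    exact ⟨0, fun v hv => by simp [h v hv]⟩

end Jacobi

theorem statement10_general (lam w : ℤ → ℂ) (hw : ∀ n, w n ≠ 0)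
    (hJ : Jacobi.Jmin lam w = Jacobi.Jmax lam w)
    (z : ℂ) :
    (∀ n : ℕ, Module.rank ℂ ↥(Submodule.span ℂ
        {x : Jacobi.ℓ2 | x ∈ Jacobi.iterKer (Jacobi.Jmax lam w) z (n + 1) ∧
          ∀ y ∈ Jacobi.iterKer (Jacobi.Jmax lam w) z n, (inner ℂ y x : ℂ) = 0}) ≤ 1) ∧
    ∀ n : ℕ,
      Module.rank ℂ ↥(Submodule.span ℂ (Jacobi.iterKer (Jacobi.Jmax lam w) z n)) ≤ n := by
  have h1 := Jacobi.rank_genEigenspace_one_le (z := z) hw hJ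
  refine ⟨fun n => ?_, fun n => ?_⟩
  · rw [← Jacobi.coe_orthogonal_inf_genEigenspace, Submodule.span_eq]
    exact (LinearPMap.rank_orthogonal_inf_genEigenspace_le _ z n).trans h1
  · rw [← Jacobi.coe_genEigenspace, Submodule.span_eq]
    exact LinearPMap.rank_genEigenspace_le _ z h1 n

/-- if `J_min = J_max =: J` and `ρ(J) ≠ ∅`, then the orthogonal complement of
`Ker (J−z)^n` inside `Ker (J−z)^{n+1}` has dimension at most `1`; in particular
`dim Ker (J−z)^n ≤ n`. -/
theorem statement10 (lam w : ℤ → ℂ) (hw : ∀ n, w n ≠ 0)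
    (hJ : Jacobi.Jmin lam w = Jacobi.Jmax lam w)
    (hres : ∃ z : ℂ, Jacobi.InRes (Jacobi.Jmax lam w) z) (z : ℂ) :
    (∀ n : ℕ, Module.rank ℂ ↥(Submodule.span ℂ
        {x : Jacobi.ℓ2 | x ∈ Jacobi.iterKer (Jacobi.Jmax lam w) z (n + 1) ∧
          ∀ y ∈ Jacobi.iterKer (Jacobi.Jmax lam w) z n, (inner ℂ y x : ℂ) = 0}) ≤ 1) ∧
    ∀ n : ℕ,
      Module.rank ℂ ↥(Submodule.span ℂ (Jacobi.iterKer (Jacobi.Jmax lam w) z n)) ≤ n :=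
  statement10_general lam w hw hJ z
end
end

section
/- Let {f^{(m)}}_{m∈ℕ₀} be complex sequences (ℤ → ℂ) with 𝒥 f^{(0)} = 0, 𝒥 f^{(m)} = m f^{(m−1)} for all m ≥ 1, and f^{(0)} ≠ 0. Then {f^{(m)}}_{m∈ℕ₀} is linearly independent. Moreover, if {g^{(m)}}_{m∈ℕ₀} is another family satisfying the same equations (with g^{(0)} ≠ 0), and if for some k ∈ ℕ₀ one has C^{(ℓ)}_n(f,g) = 0 for all n ∈ ℤ and all ℓ ∈ {0,…,k}, then g^{(k)} ∈ span{f^{(0)},…,f^{(k)}}. -/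
open Filter Topology
open scoped Classical

noncomputable section

/-!
Applying `𝒥` to a finite vanishing combination of the `f⁽ᵐ⁾` lowers every index by one, so by
induction on the length all coefficients but the one of `f⁽⁰⁾` vanish, and then that one too.

For the span statement one shows by induction on `k` that there are scalars `b` with
`g⁽ˡ⁾ = ∑ᵢ (ℓ choose i) b_{ℓ-i} f⁽ⁱ⁾` for `ℓ < k` (with exponential generating functions:
`G ≡ B F mod tᵏ`). The difference `d` of `g` and this binomial convolution is again a chain, with
`d⁽ˡ⁾ = 0` for `ℓ < k`, so `𝒥 d⁽ᵏ⁾ = 0` and `C⁽ᵏ⁾(f, d) = C(f⁽⁰⁾, d⁽ᵏ⁾)`. A binomial convolution of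
`f` has vanishing `C⁽ᵏ⁾` against `f`: its coefficient of `C(f⁽ʲ⁾, f⁽ⁱ⁾)` is symmetric in `i, j`
while `C` is antisymmetric. Hence `C(f⁽⁰⁾, d⁽ᵏ⁾) = 0`, and two solutions of `𝒥u = 0` with vanishing
Casoratian are proportional, because `w ≠ 0` makes the recurrence solvable in both directions. So
`d⁽ᵏ⁾ = c f⁽⁰⁾`, and correcting `b_k` by `c` extends the representation to `ℓ = k`.
-/

open Finset

theorem Nat.choose_mul_choose_sub_comm (ℓ i j : ℕ) :
    ℓ.choose j * (ℓ - j).choose i = ℓ.choose i * (ℓ - i).choose j := by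
  have hj := Nat.choose_mul (n := ℓ) (k := i + j) (s := j) (by omega)
  have hi := Nat.choose_mul (n := ℓ) (k := i + j) (s := i) (by omega)
  rw [Nat.add_sub_cancel] at hj
  rw [Nat.add_sub_cancel_left] at hi
  rw [← hj, ← hi, Nat.choose_symm_add]

section JordanChain

variable {K V : Type*} [CommRing K] [AddCommGroup V] [Module K V]

/-- `f m / m!` is a Jordan chain of `T` at the eigenvalue `0`; this normalization is the one of the
`z`-derivatives of a family of solutions of `(T - z) u = 0`. -/
def IsJordanChain (T : V →ₗ[K] V) (f : ℕ → V) : Prop :=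
  T (f 0) = 0 ∧ ∀ m : ℕ, T (f (m + 1)) = ((m : K) + 1) • f m

/-- The coefficient of `tˡ / ℓ!` in `B(t) F(t)` for the exponential generating functions `B`, `F`
of `b`, `f`. -/
def binomConv (b : ℕ → K) (f : ℕ → V) (ℓ : ℕ) : V :=
  ∑ i ∈ range (ℓ + 1), ((ℓ.choose i : K) * b (ℓ - i)) • f i

theorem binomConv_mem_span (b : ℕ → K) (f : ℕ → V) (ℓ : ℕ) :
    binomConv b f ℓ ∈ Submodule.span K (f '' Set.Iic ℓ) :=
  Submodule.sum_mem _ fun i hi => Submodule.smul_mem _ _ <| Submodule.subset_span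
    ⟨i, Set.mem_Iic.2 (Nat.lt_succ_iff.1 (mem_range.1 hi)), rfl⟩

theorem binomConv_update_of_lt (b : ℕ → K) (f : ℕ → V) (c : K) {ℓ k : ℕ} (h : ℓ < k) :
    binomConv (Function.update b k c) f ℓ = binomConv b f ℓ :=
  sum_congr rfl fun i _ => by rw [Function.update_of_ne (by omega)]

theorem binomConv_update_self (b : ℕ → K) (f : ℕ → V) (c : K) (k : ℕ) :
    binomConv (Function.update b k c) f k = binomConv b f k + (c - b k) • f 0 := by
  simp only [binomConv, sum_range_succ', Nat.choose_zero_right, Nat.cast_one, one_mul,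
    Nat.sub_zero, Function.update_self]
  rw [sum_congr rfl fun i hi => by rw [Function.update_of_ne (by simp at hi; omega)], sub_smul]
  abel

namespace IsJordanChain

variable {T : V →ₗ[K] V} {f g : ℕ → V}

theorem sub (hf : IsJordanChain T f) (hg : IsJordanChain T g) : IsJordanChain T (f - g) :=
  ⟨by simp [hf.1, hg.1], fun m => by simp [hf.2, hg.2, smul_sub]⟩

theorem map_eq_zero_of_forall_lt_eq_zero (hf : IsJordanChain T f) {k : ℕ}
    (h : ∀ m < k, f m = 0) : T (f k) = 0 := by
  cases k with
  | zero => exact hf.1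
  | succ k => rw [hf.2, h k k.lt_succ_self, smul_zero]

theorem binomConv (hf : IsJordanChain T f) (b : ℕ → K) : IsJordanChain T (binomConv b f) := by
  refine ⟨by simp [_root_.binomConv, hf.1], fun ℓ => ?_⟩
  rw [_root_.binomConv, _root_.binomConv, map_sum, sum_range_succ', map_smul, hf.1, smul_zero,
    add_zero, smul_sum]
  refine sum_congr rfl fun i _ => ?_
  rw [map_smul, hf.2, smul_smul, smul_smul]
  have hchoose : ((ℓ + 1 : ℕ).choose (i + 1) : K) * ((i : K) + 1) = ((ℓ : K) + 1) * ℓ.choose i := by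
    simpa using congrArg (Nat.cast (R := K)) (Nat.add_one_mul_choose_eq ℓ i).symm
  rw [Nat.add_sub_add_right]
  congr 1
  linear_combination b (ℓ - i) * hchoose

end IsJordanChain

end JordanChain

section LinearIndependent

variable {K V : Type*} [Field K] [CharZero K] [AddCommGroup V] [Module K V] {T : V →ₗ[K] V}
  {f : ℕ → V}

theorem IsJordanChain.eq_zero_of_sum_range_smul_eq_zero (hf : IsJordanChain T f) (h0 : f 0 ≠ 0)
    {m : ℕ} {c : ℕ → K} (hc : ∑ i ∈ range m, c i • f i = 0) {i : ℕ} (hi : i < m) : c i = 0 := by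
  induction m generalizing c i with
  | zero => exact absurd hi (Nat.not_lt_zero i)
  | succ m ih =>
    have hlowered : ∑ i ∈ range m, (c (i + 1) * ((i : K) + 1)) • f i = 0 := by
      simpa [map_sum, map_smul, sum_range_succ', hf.1, hf.2, smul_smul] using congrArg T hc
    have hsucc : ∀ i < m, c (i + 1) = 0 := fun i hi =>
      (mul_eq_zero.1 (ih hlowered hi)).resolve_right (Nat.cast_add_one_ne_zero i)
    rw [sum_range_succ', sum_eq_zero fun i hi => by rw [hsucc i (mem_range.1 hi), zero_smul],
      zero_add] at hc
    cases i with
    | zero => exact (smul_eq_zero.1 hc).resolve_right h0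
    | succ i => exact hsucc i (by omega)

theorem IsJordanChain.linearIndependent (hf : IsJordanChain T f) (h0 : f 0 ≠ 0) :
    LinearIndependent K f := by
  rw [linearIndependent_iff'']
  intro s c hc hsum i
  obtain ⟨m, hm⟩ := s.exists_nat_subset_range
  by_cases hi : i < m
  · refine hf.eq_zero_of_sum_range_smul_eq_zero h0 ?_ hi
    rwa [← sum_subset hm fun j _ hj => by rw [hc j hj, zero_smul]]
  · exact hc i fun his => hi (mem_range.1 (hm his))

end LinearIndependent

section Casoratian

variable {R : Type*} [CommRing R]

/-- `C_n(u, v)`, the discrete Wronskian. -/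
def casoratian : (ℤ → R) →ₗ[R] (ℤ → R) →ₗ[R] ℤ → R :=
  LinearMap.mk₂ R (fun u v n => u n * v (n + 1) - u (n + 1) * v n)
    (fun _ _ _ => by ext; simp; ring) (fun _ _ _ => by ext; simp; ring)
    (fun _ _ _ => by ext; simp; ring) (fun _ _ _ => by ext; simp; ring)

theorem casoratian_apply (u v : ℤ → R) (n : ℤ) :
    casoratian u v n = u n * v (n + 1) - u (n + 1) * v n :=
  rfl

theorem casoratian_swap (u v : ℤ → R) : casoratian v u = -casoratian u v := by
  ext n
  simp only [casoratian_apply, Pi.neg_apply]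
  ring

/-- `C⁽ˡ⁾_n(f, g)`. -/
def higherCasoratian (f g : ℕ → ℤ → R) (ℓ : ℕ) (n : ℤ) : R :=
  ∑ j ∈ range (ℓ + 1), (ℓ.choose j : R) * casoratian (f j) (g (ℓ - j)) n

theorem higherCasoratian_sub_right (f g g' : ℕ → ℤ → R) (ℓ : ℕ) :
    higherCasoratian f (g - g') ℓ = higherCasoratian f g ℓ - higherCasoratian f g' ℓ := by
  ext n
  simp [higherCasoratian, mul_sub]

theorem higherCasoratian_of_forall_lt_eq_zero (f : ℕ → ℤ → R) {g : ℕ → ℤ → R} {ℓ : ℕ}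
    (h : ∀ m < ℓ, g m = 0) : higherCasoratian f g ℓ = casoratian (f 0) (g ℓ) := by
  ext n
  rw [higherCasoratian, sum_range_succ', sum_eq_zero fun j hj => by
    rw [h _ (by simp at hj; omega)]; simp]
  simp

theorem sum_sum_mul_eq_zero_of_symm_of_antisymm [NoZeroDivisors R] [CharZero R] {ι : Type*}
    (s : Finset ι) {a c : ι → ι → R} (ha : ∀ i j, a i j = a j i) (hc : ∀ i j, c i j = -c j i) :
    ∑ i ∈ s, ∑ j ∈ s, a i j * c i j = 0 := by
  refine add_self_eq_zero.1 ?_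
  nth_rewrite 2 [sum_comm]
  simp only [← sum_add_distrib]
  exact sum_eq_zero fun i _ => sum_eq_zero fun j _ => by rw [ha j i, hc j i]; ring

theorem higherCasoratian_binomConv_right [NoZeroDivisors R] [CharZero R] (f : ℕ → ℤ → R)
    (b : ℕ → R) (ℓ : ℕ) : higherCasoratian f (binomConv b f) ℓ = 0 := by
  ext n
  have hinner : ∀ j ∈ range (ℓ + 1), (ℓ.choose j : R) * casoratian (f j) (binomConv b f (ℓ - j)) n
      = ∑ i ∈ range (ℓ + 1), ((ℓ.choose j * (ℓ - j).choose i : ℕ) * b (ℓ - j - i)) *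
          casoratian (f j) (f i) n := by
    intro j _
    rw [binomConv, map_sum, Finset.sum_apply, mul_sum]
    refine sum_subset (range_subset_range.2 (by omega)) (fun i _ hi => ?_) |>.trans
      (sum_congr rfl fun i _ => ?_)
    · rw [Nat.choose_eq_zero_of_lt (n := ℓ - j) (k := i) (by simp at hi; omega)]
      simp
    · simp only [map_smul, Pi.smul_apply, smul_eq_mul]
      push_cast
      ring
  rw [higherCasoratian, sum_congr rfl hinner, Pi.zero_apply]
  refine sum_sum_mul_eq_zero_of_symm_of_antisymm _ (fun j i => ?_)
    fun j i => congrFun (casoratian_swap (f i) (f j)) n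
  rw [Nat.choose_mul_choose_sub_comm, Nat.sub_right_comm]

end Casoratian

namespace Jacobi

variable {lam w : ℤ → ℂ}

def Jlin (lam w : ℤ → ℂ) : (ℤ → ℂ) →ₗ[ℂ] ℤ → ℂ where
  toFun := Jop lam w
  map_add' := Jop_add lam w
  map_smul' := Jop_smul lam w

@[simp]
theorem Jlin_apply (u : ℤ → ℂ) : Jlin lam w u = Jop lam w u :=
  rfl

theorem eq_zero_of_Jop_eq_zero (hw : ∀ n, w n ≠ 0) {u : ℤ → ℂ} (hu : Jop lam w u = 0) {N : ℤ}
    (h₀ : u N = 0) (h₁ : u (N + 1) = 0) : u = 0 := by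
  have hrec (n : ℤ) : w (n - 1) * u (n - 1) + lam n * u n + w n * u (n + 1) = 0 := congrFun hu n
  have hpair : ∀ n, u n = 0 ∧ u (n + 1) = 0 := by
    intro n
    refine Int.inductionOn' n N ⟨h₀, h₁⟩ (fun k _ ⟨hk, hk₁⟩ => ⟨hk₁, ?_⟩)
      fun k _ ⟨hk, hk₁⟩ => ⟨?_, by rwa [sub_add_cancel]⟩
    · simpa [hk, hk₁, hw] using hrec (k + 1)
    · simpa [hk, hk₁, hw] using hrec k
  exact funext fun n => (hpair n).1

theorem exists_eq_smul_of_casoratian_eq_zero (hw : ∀ n, w n ≠ 0) {u v : ℤ → ℂ}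
    (hu : Jop lam w u = 0) (hv : Jop lam w v = 0) (hu₀ : u ≠ 0) (huv : casoratian u v = 0) :
    ∃ c : ℂ, v = c • u := by
  obtain ⟨N, hN⟩ := Function.ne_iff.1 hu₀
  rw [Pi.zero_apply] at hN
  refine ⟨v N / u N, eq_of_sub_eq_zero (eq_zero_of_Jop_eq_zero (lam := lam) hw (N := N) ?_ ?_ ?_)⟩
  · rw [← Jlin_apply, map_sub, map_smul, Jlin_apply, Jlin_apply, hu, hv]
    simp
  · simp [hN]
  · have hC := congrFun huv N
    rw [casoratian_apply, Pi.zero_apply] at hC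
    simp only [Pi.sub_apply, Pi.smul_apply, smul_eq_mul]
    field_simp
    linear_combination hC

theorem exists_forall_lt_eq_binomConv (hw : ∀ n, w n ≠ 0) {f g : ℕ → ℤ → ℂ}
    (hf : IsJordanChain (Jlin lam w) f) (hf₀ : f 0 ≠ 0) (hg : IsJordanChain (Jlin lam w) g)
    {k : ℕ} (hC : ∀ ℓ < k, higherCasoratian f g ℓ = 0) :
    ∃ b : ℕ → ℂ, ∀ ℓ < k, g ℓ = binomConv b f ℓ := by
  induction k with
  | zero => exact ⟨0, fun ℓ h => absurd h (Nat.not_lt_zero ℓ)⟩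
  | succ k ih =>
    obtain ⟨b, hb⟩ := ih fun ℓ hℓ => hC ℓ (by omega)
    set d := g - binomConv b f with hd_def
    have hd : IsJordanChain (Jlin lam w) d := hg.sub (hf.binomConv b)
    have hd_lt : ∀ m < k, d m = 0 := fun m hm => sub_eq_zero.2 (hb m hm)
    have hCd : casoratian (f 0) (d k) = 0 := by
      rw [← higherCasoratian_of_forall_lt_eq_zero f hd_lt, higherCasoratian_sub_right,
        hC k k.lt_succ_self, higherCasoratian_binomConv_right, sub_zero]
    obtain ⟨c, hc⟩ := exists_eq_smul_of_casoratian_eq_zero hw hf.1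
      (hd.map_eq_zero_of_forall_lt_eq_zero hd_lt) hf₀ hCd
    refine ⟨Function.update b k (b k + c), fun ℓ hℓ => ?_⟩
    rcases Nat.lt_succ_iff_lt_or_eq.1 hℓ with hℓ | rfl
    · rw [binomConv_update_of_lt _ _ _ hℓ, hb ℓ hℓ]
    · rw [binomConv_update_self, add_sub_cancel_left, ← hc, hd_def, Pi.sub_apply,
        add_sub_cancel]

end Jacobi

theorem statement11_general (lam w : ℤ → ℂ) (hw : ∀ n, w n ≠ 0)
    (f g : ℕ → ℤ → ℂ)
    (hf0 : Jacobi.Jop lam w (f 0) = 0) (hf0' : f 0 ≠ 0)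
    (hf : ∀ m : ℕ, Jacobi.Jop lam w (f (m + 1)) = ((m : ℂ) + 1) • f m)
    (hg0 : Jacobi.Jop lam w (g 0) = 0)
    (hg : ∀ m : ℕ, Jacobi.Jop lam w (g (m + 1)) = ((m : ℂ) + 1) • g m) :
    LinearIndependent ℂ f ∧
    ∀ k : ℕ,
      (∀ ℓ ≤ k, ∀ n : ℤ,
        (∑ j ∈ Finset.range (ℓ + 1), (ℓ.choose j : ℂ) *
          (f j n * g (ℓ - j) (n + 1) - f j (n + 1) * g (ℓ - j) n)) = 0) →
      g k ∈ Submodule.span ℂ (f '' Set.Iic k) := by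
  have hfJ : IsJordanChain (Jacobi.Jlin lam w) f := ⟨hf0, hf⟩
  have hgJ : IsJordanChain (Jacobi.Jlin lam w) g := ⟨hg0, hg⟩
  refine ⟨hfJ.linearIndependent hf0', fun k hC => ?_⟩
  obtain ⟨b, hb⟩ := Jacobi.exists_forall_lt_eq_binomConv hw hfJ hf0' hgJ (k := k + 1)
    fun ℓ hℓ => funext (hC ℓ (Nat.lt_succ_iff.1 hℓ))
  rw [hb k k.lt_succ_self]
  exact binomConv_mem_span b f k

/-- the purely algebraic lemma on chains `𝒥f⁽⁰⁾ = 0`, `𝒥f⁽ᵐ⁾ = m f⁽ᵐ⁻¹⁾`: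
linear independence, and the span implication from vanishing of the `C^{(ℓ)}`'s. -/
theorem statement11 (lam w : ℤ → ℂ) (hw : ∀ n, w n ≠ 0)
    (f g : ℕ → ℤ → ℂ)
    (hf0 : Jacobi.Jop lam w (f 0) = 0) (hf0' : f 0 ≠ 0)
    (hf : ∀ m : ℕ, Jacobi.Jop lam w (f (m + 1)) = ((m : ℂ) + 1) • f m)
    (hg0 : Jacobi.Jop lam w (g 0) = 0) (hg0' : g 0 ≠ 0)
    (hg : ∀ m : ℕ, Jacobi.Jop lam w (g (m + 1)) = ((m : ℂ) + 1) • g m) :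
    LinearIndependent ℂ f ∧
    ∀ k : ℕ,
      (∀ ℓ ≤ k, ∀ n : ℤ,
        (∑ j ∈ Finset.range (ℓ + 1), (ℓ.choose j : ℂ) *
          (f j n * g (ℓ - j) (n + 1) - f j (n + 1) * g (ℓ - j) n)) = 0) →
      g k ∈ Submodule.span ℂ (f '' Set.Iic k) :=
  statement11_general lam w hw f g hf0 hf0' hf hg0 hg
end
end

section
/- Under the convergence condition, for every z ∈ ℂ₀^λ and every k ∈ ℕ₀ one has ∑_{n=0}^{∞} |P_n^{(k)}(z)| < ∞ and ∑_{n=−∞}^{0} |(d^k/dz^k)(1/(w_{n−1} P_{n−1}(z)))| < ∞, where the superscript (k) denotes the k-th complex derivative in z. -/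
/-!
For `n ≥ 0`, `𝒫_n(u) = ∏_{j<n} w_j / (u - λ_{j+1})`, and after the reflection `j ↦ -j` the
sequence `1 / (w_{-n-1} 𝒫_{-n-1}(u))` is `(u - λ_0)⁻¹` times a product of the same shape.
On a closed disc around `z` that avoids the closure of `{λ_n}` one has
`|λ_j - z₀| ≤ C |u - λ_j|` uniformly, and telescoping gives for such a product `p_n`
`|p_n(u)|² |λ_n - z₀| ≤ |λ_0 - z₀| ∏_{j<n} C² t_j`, with `t_j = |w_j² / ((λ_j - z₀)(λ_{j+1} - z₀))|`.
Since `t_j → 0` by the convergence condition, the ratio test makes this bound summable, and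
Cauchy's estimate on the disc transfers it to every derivative at `z`.
-/

open Filter Topology
open scoped Classical

noncomputable section

namespace Jacobi

open Metric Finset

section ratioProd

variable {μ v : ℕ → ℂ} {z₀ u : ℂ}

def ratioProd (μ v : ℕ → ℂ) (u : ℂ) (n : ℕ) : ℂ :=
  ∏ j ∈ range n, v j / (u - μ (j + 1))

def convTerm (μ v : ℕ → ℂ) (z₀ : ℂ) (j : ℕ) : ℝ :=
  ‖v j ^ 2 / ((μ j - z₀) * (μ (j + 1) - z₀))‖

lemma ratioProd_succ (n : ℕ) :
    ratioProd μ v u (n + 1) = ratioProd μ v u n * (v n / (u - μ (n + 1))) :=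
  prod_range_succ _ _

lemma differentiableAt_ratioProd (hu : ∀ j, u ≠ μ j) (n : ℕ) :
    DifferentiableAt ℂ (fun u => ratioProd μ v u n) u :=
  DifferentiableAt.fun_finsetProd fun _ _ =>
    (differentiableAt_const _).div (differentiableAt_id.sub_const _) (sub_ne_zero.2 (hu _))

lemma norm_div_sq_mul_le_convTerm {C : ℝ} (hμ : ∀ j, μ j ≠ z₀)
    (hC : ∀ j, ‖μ j - z₀‖ ≤ C * ‖u - μ j‖) (n : ℕ) :
    ‖v n / (u - μ (n + 1))‖ ^ 2 * ‖μ (n + 1) - z₀‖ ≤ C ^ 2 * convTerm μ v z₀ n * ‖μ n - z₀‖ := by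
  have ha : 0 < ‖μ n - z₀‖ := norm_pos_iff.2 (sub_ne_zero.2 (hμ n))
  have hb : 0 < ‖μ (n + 1) - z₀‖ := norm_pos_iff.2 (sub_ne_zero.2 (hμ (n + 1)))
  have hc : 0 < ‖u - μ (n + 1)‖ :=
    (norm_nonneg _).lt_of_ne fun h => by simpa [← h] using hb.trans_le (hC (n + 1))
  have hsq : ‖μ (n + 1) - z₀‖ ^ 2 ≤ (C * ‖u - μ (n + 1)‖) ^ 2 :=
    pow_le_pow_left₀ hb.le (hC (n + 1)) 2
  rw [convTerm, norm_div, norm_div, norm_pow, norm_mul]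
  field_simp
  nlinarith [mul_le_mul_of_nonneg_left hsq (sq_nonneg ‖v n‖)]

lemma norm_ratioProd_sq_mul_le {C : ℝ} (hμ : ∀ j, μ j ≠ z₀)
    (hC : ∀ j, ‖μ j - z₀‖ ≤ C * ‖u - μ j‖) (n : ℕ) :
    ‖ratioProd μ v u n‖ ^ 2 * ‖μ n - z₀‖ ≤
      ‖μ 0 - z₀‖ * ∏ j ∈ range n, C ^ 2 * convTerm μ v z₀ j := by
  induction n with
  | zero => simp [ratioProd]
  | succ n ih =>
    rw [ratioProd_succ, norm_mul, mul_pow, prod_range_succ, ← mul_assoc]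
    calc ‖ratioProd μ v u n‖ ^ 2 * ‖v n / (u - μ (n + 1))‖ ^ 2 * ‖μ (n + 1) - z₀‖
        ≤ ‖ratioProd μ v u n‖ ^ 2 * (C ^ 2 * convTerm μ v z₀ n * ‖μ n - z₀‖) := by
          rw [mul_assoc]
          exact mul_le_mul_of_nonneg_left (norm_div_sq_mul_le_convTerm hμ hC n) (sq_nonneg _)
      _ = (‖ratioProd μ v u n‖ ^ 2 * ‖μ n - z₀‖) * (C ^ 2 * convTerm μ v z₀ n) := by ring
      _ ≤ _ := mul_le_mul_of_nonneg_right ih (mul_nonneg (sq_nonneg C) (norm_nonneg _))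

lemma summable_sqrt_prod_range {s : ℕ → ℝ} (hs0 : ∀ n, 0 ≤ s n) (hs : Tendsto s atTop (𝓝 0)) :
    Summable fun n => √(∏ j ∈ range n, s j) := by
  have hsqrt : Tendsto (fun n => √(s n)) atTop (𝓝 0) := by
    have := (Real.continuous_sqrt.tendsto 0).comp hs
    rwa [Real.sqrt_zero] at this
  refine summable_of_ratio_norm_eventually_le (r := 1 / 2) (by norm_num) ?_
  filter_upwards [hsqrt.eventually_le_const (by norm_num : (0 : ℝ) < 1 / 2)] with n hn
  rw [Real.norm_of_nonneg (Real.sqrt_nonneg _), Real.norm_of_nonneg (Real.sqrt_nonneg _),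
    prod_range_succ, Real.sqrt_mul (prod_nonneg fun j _ => hs0 j), mul_comm (1 / 2)]
  exact mul_le_mul_of_nonneg_left hn (Real.sqrt_nonneg _)

lemma exists_summable_bound_ratioProd {S : Set ℂ} {C d₀ : ℝ} (hd₀ : 0 < d₀)
    (hμ : ∀ j, d₀ ≤ ‖μ j - z₀‖) (hC : ∀ u ∈ S, ∀ j, ‖μ j - z₀‖ ≤ C * ‖u - μ j‖)
    (ht : Tendsto (convTerm μ v z₀) atTop (𝓝 0)) :
    ∃ g : ℕ → ℝ, Summable g ∧ ∀ n, ∀ u ∈ S, ‖ratioProd μ v u n‖ ≤ g n := by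
  have hμ₀ : ∀ j, μ j ≠ z₀ := fun j => sub_ne_zero.1 (norm_pos_iff.1 (hd₀.trans_le (hμ j)))
  refine ⟨fun n => √(‖μ 0 - z₀‖ / d₀) * √(∏ j ∈ range n, C ^ 2 * convTerm μ v z₀ j), ?_, ?_⟩
  · refine (summable_sqrt_prod_range (s := fun j => C ^ 2 * convTerm μ v z₀ j)
      (fun j => mul_nonneg (sq_nonneg C) (norm_nonneg _)) ?_).mul_left _
    simpa only [mul_zero] using ht.const_mul (C ^ 2)
  · intro n u hu
    dsimp only
    rw [← Real.sqrt_mul (by positivity)]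
    refine (abs_norm _).symm.trans_le (Real.abs_le_sqrt ?_)
    rw [div_mul_eq_mul_div, le_div_iff₀ hd₀]
    exact (mul_le_mul_of_nonneg_left (hμ n) (sq_nonneg _)).trans
      (norm_ratioProd_sq_mul_le hμ₀ (hC u hu) n)

end ratioProd

lemma summable_norm_iteratedDeriv_of_norm_le {F : ℕ → ℂ → ℂ} {g : ℕ → ℝ} {c : ℂ} {R : ℝ}
    (hR : 0 < R) (hF : ∀ n, DifferentiableOn ℂ (F n) (closedBall c R))
    (hg : Summable g) (hFg : ∀ n, ∀ u ∈ closedBall c R, ‖F n u‖ ≤ g n) (k : ℕ) :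
    Summable fun n => ‖iteratedDeriv k (F n) c‖ := by
  have hcauchy (n : ℕ) : ‖iteratedDeriv k (F n) c‖ ≤ k.factorial * g n / R ^ k :=
    Complex.norm_iteratedDeriv_le_of_forall_mem_sphere_norm_le k hR
      ((hF n).diffContOnCl_ball subset_rfl) fun u hu => hFg n u (sphere_subset_closedBall hu)
  exact ((hg.mul_left (k.factorial : ℝ)).div_const (R ^ k)).of_nonneg_of_le
    (fun n => norm_nonneg _) hcauchy

lemma summable_norm_iteratedDeriv_mul_ratioProd {μ v : ℕ → ℂ} {f : ℂ → ℂ} {z₀ c : ℂ}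
    {R C d₀ M : ℝ} (hR : 0 < R) (hd₀ : 0 < d₀) (hμ : ∀ j, d₀ ≤ ‖μ j - z₀‖)
    (hball : ∀ u ∈ closedBall c R, ∀ j, R ≤ ‖u - μ j‖ ∧ ‖μ j - z₀‖ ≤ C * ‖u - μ j‖)
    (ht : Tendsto (convTerm μ v z₀) atTop (𝓝 0))
    (hf : DifferentiableOn ℂ f (closedBall c R)) (hfM : ∀ u ∈ closedBall c R, ‖f u‖ ≤ M)
    (k : ℕ) :
    Summable fun n => ‖iteratedDeriv k (fun u => f u * ratioProd μ v u n) c‖ := by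
  obtain ⟨g, hg, hgb⟩ :=
    exists_summable_bound_ratioProd hd₀ hμ (fun u hu j => (hball u hu j).2) ht
  have hM : 0 ≤ M := (norm_nonneg _).trans (hfM c (mem_closedBall_self hR.le))
  refine summable_norm_iteratedDeriv_of_norm_le hR (fun n u hu => ?_) (hg.mul_left M)
    (fun n u hu => ?_) k
  · have hu' : ∀ j, u ≠ μ j := fun j =>
      sub_ne_zero.1 (norm_pos_iff.1 (hR.trans_le (hball u hu j).1))
    exact (hf u hu).mul (differentiableAt_ratioProd hu' n).differentiableWithinAt
  · rw [norm_mul]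
    exact mul_le_mul (hfM u hu) (hgb n u hu) (norm_nonneg _) hM

section metric

variable {E : Type*} [NormedAddCommGroup E] {T : Set E} {z : E}

lemma exists_pos_forall_le_norm_sub (hz : z ∉ closure T) : ∃ d > 0, ∀ x ∈ T, d ≤ ‖x - z‖ := by
  simp only [Metric.mem_closure_iff, not_forall, not_exists, not_and, not_lt] at hz
  obtain ⟨d, hd, h⟩ := hz
  exact ⟨d, hd, fun x hx => by simpa [dist_eq_norm, norm_sub_rev] using h x hx⟩

lemma exists_closedBall_forall_norm_sub_le (hz : z ∉ closure T) (z₀ : E) :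
    ∃ R > 0, ∃ C : ℝ, ∀ u ∈ closedBall z R, ∀ x ∈ T, R ≤ ‖u - x‖ ∧ ‖x - z₀‖ ≤ C * ‖u - x‖ := by
  obtain ⟨d, hd, hT⟩ := exists_pos_forall_le_norm_sub hz
  refine ⟨d / 2, by positivity, 1 + (d / 2 + ‖z - z₀‖) / (d / 2), fun u hu x hx => ?_⟩
  have hu' : ‖u - z‖ ≤ d / 2 := mem_closedBall_iff_norm.1 hu
  have hR : d / 2 ≤ ‖u - x‖ := by
    have := norm_sub_le_norm_sub_add_norm_sub x u z
    linarith [hT x hx, norm_sub_rev u x, norm_sub_rev u z]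
  refine ⟨hR, ?_⟩
  have hxz₀ : ‖x - z₀‖ ≤ ‖u - x‖ + (d / 2 + ‖z - z₀‖) := by
    linarith [norm_sub_le_norm_sub_add_norm_sub x u z₀, norm_sub_le_norm_sub_add_norm_sub u z z₀,
      norm_sub_rev u x]
  have hq : d / 2 + ‖z - z₀‖ ≤ (d / 2 + ‖z - z₀‖) / (d / 2) * ‖u - x‖ := by
    rw [div_mul_eq_mul_div, le_div_iff₀ (by positivity)]
    exact mul_le_mul_of_nonneg_left hR (by positivity)
  linarith

end metric

variable {lam w : ℤ → ℂ} {u z₀ : ℂ}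

lemma Pz_zero : Pz lam w u 0 = 1 := by
  simp [Pz]

lemma Pz_add_one {n : ℤ} (hn : 0 ≤ n) :
    Pz lam w u (n + 1) = Pz lam w u n * (w n / (u - lam (n + 1))) := by
  rw [Pz, Pz, if_pos (by omega), if_pos hn,
    ← insert_Icc_right_eq_Icc_add_one (by omega : (1 : ℤ) ≤ n + 1), prod_insert (by simp),
    add_sub_cancel_right, mul_comm]

lemma Pz_of_nonpos {n : ℤ} (hn : n ≤ 0) :
    Pz lam w u n = ∏ k ∈ Icc (n + 1) 0, (u - lam k) / w (k - 1) := by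
  rcases hn.lt_or_eq with hn | rfl
  · rw [Pz, if_neg (by omega)]
  · simp [Pz]

lemma Pz_sub_one {n : ℤ} (hn : n ≤ 0) :
    Pz lam w u (n - 1) = (u - lam n) / w (n - 1) * Pz lam w u n := by
  rw [Pz_of_nonpos (by omega), Pz_of_nonpos hn, sub_add_cancel,
    ← insert_Icc_add_one_left_eq_Icc hn, prod_insert (by simp)]

lemma Pz_natCast (n : ℕ) :
    Pz lam w u n = ratioProd (fun j => lam j) (fun j => w j) u n := by
  induction n with
  | zero => simp [Pz_zero, ratioProd]
  | succ n ih => rw [Nat.cast_succ, Pz_add_one (by positivity), ih, ratioProd_succ, Nat.cast_succ]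

lemma inv_w_mul_Pz_neg (hw : ∀ n, w n ≠ 0) (n : ℕ) :
    (w (-n - 1) * Pz lam w u (-n - 1))⁻¹ =
      (u - lam 0)⁻¹ * ratioProd (fun j => lam (-j)) (fun j => w (-j - 1)) u n := by
  induction n with
  | zero =>
    rw [Nat.cast_zero, neg_zero, Pz_sub_one le_rfl, Pz_zero]
    simp only [ratioProd, range_zero, prod_empty, mul_one, mul_inv, inv_div]
    rw [mul_div_assoc', inv_mul_cancel₀ (hw _), one_div]
  | succ n ih =>
    have hn : -((n + 1 : ℕ) : ℤ) = -n - 1 := by push_cast; ring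
    rw [ratioProd_succ, ← mul_assoc, ← ih, hn, Pz_sub_one (by omega)]
    have hcancel : w (-n - 1 - 1) * ((u - lam (-n - 1)) / w (-n - 1 - 1) * Pz lam w u (-n - 1)) =
        (u - lam (-n - 1)) * Pz lam w u (-n - 1) := by
      field_simp [hw]
    rw [hcancel, mul_inv, mul_inv, div_eq_mul_inv, mul_comm (w _)⁻¹, mul_assoc,
      inv_mul_cancel_left₀ (hw _), mul_comm]

lemma tendsto_convTerm_natCast
    (hsum : Summable fun n : ℤ => ‖w n ^ 2 / ((lam n - z₀) * (lam (n + 1) - z₀))‖) :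
    Tendsto (convTerm (fun j : ℕ => lam j) (fun j => w j) z₀) atTop (𝓝 0) :=
  (hsum.comp_injective Nat.cast_injective).tendsto_atTop_zero.congr fun j => by simp [convTerm]

lemma tendsto_convTerm_neg
    (hsum : Summable fun n : ℤ => ‖w n ^ 2 / ((lam n - z₀) * (lam (n + 1) - z₀))‖) :
    Tendsto (convTerm (fun j : ℕ => lam (-j)) (fun j => w (-j - 1)) z₀) atTop (𝓝 0) := by
  refine (hsum.comp_injective (i := fun j : ℕ => -(j : ℤ) - 1)
    fun a b h => by simp only at h; omega).tendsto_atTop_zero.congr fun j => ?_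
  have hj : -((j + 1 : ℕ) : ℤ) = -j - 1 := by push_cast; ring
  simp only [Function.comp_apply, convTerm, hj, sub_add_cancel, mul_comm]

end Jacobi

open Jacobi Metric in
/-- summability of all `z`-derivatives of `𝒫_n(z)` at `+∞` and of
`1/(w_{n−1}𝒫_{n−1}(z))` at `−∞`, for `z ∈ ℂ₀^λ`. -/
theorem statement12 (lam w : ℤ → ℂ) (hw : ∀ n, w n ≠ 0) (hconv : Jacobi.ConvCond lam w)
    (z : ℂ) (hz : z ∈ Jacobi.C0 lam) (k : ℕ) :
    Summable (fun n : ℕ => ‖iteratedDeriv k (fun u => Jacobi.Pz lam w u (n : ℤ)) z‖) ∧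
    Summable (fun n : ℕ => ‖iteratedDeriv k
        (fun u => 1 / (w (-(n : ℤ) - 1) * Jacobi.Pz lam w u (-(n : ℤ) - 1))) z‖) := by
  obtain ⟨z₀, hz₀, hsum⟩ := hconv
  obtain ⟨d₀, hd₀, hlam⟩ := exists_pos_forall_le_norm_sub hz₀
  obtain ⟨R, hR, C, hball⟩ := exists_closedBall_forall_norm_sub_le hz z₀
  have hlam₀ (u) (hu : u ∈ closedBall z R) : R ≤ ‖u - lam 0‖ := (hball u hu _ ⟨0, rfl⟩).1
  constructor
  · simpa only [one_mul, Pz_natCast] using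
      summable_norm_iteratedDeriv_mul_ratioProd hR hd₀ (fun j => hlam _ ⟨_, rfl⟩)
        (fun u hu j => hball u hu _ ⟨_, rfl⟩) (tendsto_convTerm_natCast hsum)
        (differentiableOn_const 1) (fun _ _ => norm_one.le) k
  · have hinv : DifferentiableOn ℂ (fun u => (u - lam 0)⁻¹) (closedBall z R) := fun u hu =>
      ((differentiableAt_id.sub_const (lam 0)).inv
        (norm_pos_iff.1 (hR.trans_le (hlam₀ u hu)))).differentiableWithinAt
    simpa only [one_div, inv_w_mul_Pz_neg hw] using
      summable_norm_iteratedDeriv_mul_ratioProd hR hd₀ (fun j => hlam _ ⟨_, rfl⟩)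
        (fun u hu j => hball u hu _ ⟨_, rfl⟩) (tendsto_convTerm_neg hsum) hinv
        (fun u hu => by rw [norm_inv]; exact inv_anti₀ hR (hlam₀ u hu)) k

end
end
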